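/- arXiv:1808.03328 — 7 statements merged into one kernel-verified Lean document; each statement's English description precedes it below -/
import Mathlib

section
/- For t ∈ {0,...,T-1}, the value C_t := esssup over stopping times τ ∈ S_{t+1,T+1} of E^Q_t[ Σ_{s=t+1}^{τ-1} (R_{s-1} - R_s - X_s) ] (with C_T := 0) satisfies the backward recursion C_t = E^Q_t[ (R_t - X_{t+1} - V_{t+1})_+ ], where V_t := R_t - C_t for t < T and V_T := 0. -/
/-!
Write `g s = R (s - 1) - R s - X s` for the reward collected at time `s`, and let `W` be the
dynamic-programming value `W_T = 0`, `W_t = E_t[(g_{t+1} + W_{t+1})_+]`. The reward collected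
strictly between `t` and `τ` is `1_{τ > t+1} (g_{t+1} + reward strictly between t+1 and τ)`,
and `{τ > t+1}` is `F_{t+1}`-measurable, so the tower property and backward induction give
`E_t[reward] ≤ W_t` for every stopping time. Equality holds for the stopping time that goes on
past `t+1` exactly on `{g_{t+1} + W_{t+1} ≥ 0}` and then behaves optimally from `t+1`. Hence
the essential supremum `C_t` is `W_t`, and substituting `V_{t+1} = R_{t+1} - W_{t+1}` (or
`V_T = R_T = 0`) into the recursion for `W` gives the claim.
-/

open MeasureTheory Finset

namespace OptimalStopping

variable {Ω : Type*} {m0 : MeasurableSpace Ω}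

def runningReward (g : ℕ → Ω → ℝ) (t : ℕ) (τ : Ω → ℕ) (ω : Ω) : ℝ :=
  ∑ s ∈ Icc (t + 1) (τ ω - 1), g s ω

noncomputable def value (μ : Measure Ω) (ℱ : Filtration ℕ m0) (T : ℕ) (g : ℕ → Ω → ℝ)
    (t : ℕ) : Ω → ℝ :=
  if t < T then μ[fun ω => max (g (t + 1) ω + value μ ℱ T g (t + 1) ω) 0 | ℱ t] else 0
termination_by T - t

variable {μ : Measure Ω} {ℱ : Filtration ℕ m0} {T : ℕ} {g : ℕ → Ω → ℝ} {τ : Ω → ℕ}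

theorem value_of_le {t : ℕ} (h : T ≤ t) : value μ ℱ T g t = 0 := by
  rw [value, if_neg h.not_gt]

theorem value_of_lt {t : ℕ} (h : t < T) :
    value μ ℱ T g t = μ[fun ω => max (g (t + 1) ω + value μ ℱ T g (t + 1) ω) 0 | ℱ t] := by
  rw [value, if_pos h]

theorem stronglyMeasurable_value (t : ℕ) : StronglyMeasurable[ℱ t] (value μ ℱ T g t) := by
  rcases lt_or_ge t T with h | h
  · rw [value_of_lt h]; exact stronglyMeasurable_condExp
  · rw [value_of_le h]; exact stronglyMeasurable_zero

theorem integrable_value (t : ℕ) : Integrable (value μ ℱ T g t) μ := by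
  rcases lt_or_ge t T with h | h
  · rw [value_of_lt h]; exact integrable_condExp
  · rw [value_of_le h]; exact integrable_zero _ _ _

theorem measurableSet_lt_of_isStoppingTime
    (hτ : IsStoppingTime ℱ (fun ω => (τ ω : WithTop ℕ))) (n : ℕ) :
    MeasurableSet[ℱ n] {ω | n < τ ω} := by
  simpa using hτ.measurableSet_gt n

theorem runningReward_of_le {t : ℕ} (h : ∀ ω, τ ω ≤ t + 1) : runningReward g t τ = 0 := by
  ext ω
  simp only [runningReward, Pi.zero_apply]
  rw [Icc_eq_empty (by have := h ω; omega), sum_empty]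

theorem runningReward_eq_indicator {t : ℕ} :
    runningReward g t τ =
      {ω | t + 1 < τ ω}.indicator (g (t + 1) + runningReward g (t + 1) τ) := by
  ext ω
  by_cases h : t + 1 < τ ω
  · rw [Set.indicator_of_mem (show ω ∈ {ω | t + 1 < τ ω} from h), Pi.add_apply]
    simp only [runningReward]
    rw [← insert_Icc_add_one_left_eq_Icc (by omega), sum_insert (by simp)]
  · rw [Set.indicator_of_notMem (show ω ∉ {ω | t + 1 < τ ω} from h), runningReward,
      Icc_eq_empty (by omega), sum_empty]

theorem runningReward_piecewise {t : ℕ} (hτt : ∀ ω, t + 1 < τ ω) (A : Set Ω)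
    [DecidablePred (· ∈ A)] :
    runningReward g t (A.piecewise τ fun _ => t + 1) =
      A.indicator (g (t + 1) + runningReward g (t + 1) τ) := by
  ext ω
  by_cases hω : ω ∈ A
  · rw [Set.indicator_of_mem hω, runningReward_eq_indicator,
      Set.indicator_of_mem (by simp [hω, hτt])]
    simp [runningReward, hω]
  · rw [Set.indicator_of_notMem hω]
    simp [runningReward, hω]

theorem integrable_runningReward (hg : ∀ s, Integrable (g s) μ)
    (hτ : IsStoppingTime ℱ (fun ω => (τ ω : WithTop ℕ))) {N : ℕ} (hτN : ∀ ω, τ ω ≤ N + 1)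
    (t : ℕ) : Integrable (runningReward g t τ) μ := by
  rcases lt_or_ge t N with h | h
  · rw [runningReward_eq_indicator]
    exact ((hg (t + 1)).add (integrable_runningReward hg hτ hτN (t + 1))).indicator
      (ℱ.le _ _ (measurableSet_lt_of_isStoppingTime hτ (t + 1)))
  · rw [runningReward_of_le fun ω => (hτN ω).trans (by omega)]
    exact integrable_zero _ _ _
termination_by N - t

theorem condExp_indicator_add_condExp {m m' : MeasurableSpace Ω} (hm : m ≤ m') (hm' : m' ≤ m0)
    [SigmaFinite (μ.trim hm')] {B : Set Ω} (hB : MeasurableSet[m'] B) {h f : Ω → ℝ}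
    (hh : StronglyMeasurable[m'] h) (hhi : Integrable h μ) (hf : Integrable f μ) :
    μ[B.indicator (h + f) | m] =ᵐ[μ] μ[B.indicator (h + μ[f | m']) | m] := by
  have hadd : μ[h + f | m'] =ᵐ[μ] h + μ[f | m'] := by
    simpa only [condExp_of_stronglyMeasurable hm' hh hhi] using condExp_add hhi hf m'
  calc μ[B.indicator (h + f) | m]
      =ᵐ[μ] μ[μ[B.indicator (h + f) | m'] | m] := (condExp_condExp_of_le hm hm').symm
    _ =ᵐ[μ] μ[B.indicator (h + μ[f | m']) | m] :=
      condExp_congr_ae ((condExp_indicator (hhi.add hf) hB).trans hadd.indicator)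

variable [SigmaFiniteFiltration μ ℱ]

theorem condExp_runningReward_le_value (hg : ∀ s, Integrable (g s) μ)
    (hgm : ∀ s, StronglyMeasurable[ℱ s] (g s)) (t : ℕ)
    (hτ : IsStoppingTime ℱ (fun ω => (τ ω : WithTop ℕ))) (hτT : ∀ ω, τ ω ≤ T + 1) :
    μ[runningReward g t τ | ℱ t] ≤ᵐ[μ] value μ ℱ T g t := by
  rcases lt_or_ge t T with ht | ht
  · set B := {ω | t + 1 < τ ω}
    have hB : MeasurableSet[ℱ (t + 1)] B := measurableSet_lt_of_isStoppingTime hτ (t + 1)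
    have ih := condExp_runningReward_le_value hg hgm (t + 1) hτ hτT
    have hle : B.indicator (g (t + 1) + μ[runningReward g (t + 1) τ | ℱ (t + 1)])
        ≤ᵐ[μ] fun ω => max (g (t + 1) ω + value μ ℱ T g (t + 1) ω) 0 := by
      filter_upwards [ih] with ω hω
      by_cases hωB : ω ∈ B
      · simp only [Set.indicator_of_mem hωB, Pi.add_apply]
        exact le_max_of_le_left (by linarith)
      · simp only [Set.indicator_of_notMem hωB, le_max_right]
    calc μ[runningReward g t τ | ℱ t]
        = μ[B.indicator (g (t + 1) + runningReward g (t + 1) τ) | ℱ t] := by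
          rw [runningReward_eq_indicator]
      _ =ᵐ[μ] μ[B.indicator (g (t + 1) + μ[runningReward g (t + 1) τ | ℱ (t + 1)]) | ℱ t] :=
          condExp_indicator_add_condExp (ℱ.mono t.le_succ) (ℱ.le _) hB (hgm _) (hg _)
            (integrable_runningReward hg hτ hτT _)
      _ ≤ᵐ[μ] μ[fun ω => max (g (t + 1) ω + value μ ℱ T g (t + 1) ω) 0 | ℱ t] :=
          condExp_mono (((hg _).add integrable_condExp).indicator (ℱ.le _ _ hB))
            ((hg _).add (integrable_value _)).pos_part hle
      _ = value μ ℱ T g t := (value_of_lt ht).symm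
  · rw [runningReward_of_le fun ω => (hτT ω).trans (by omega), condExp_zero, value_of_le ht]
termination_by T - t

theorem exists_condExp_runningReward_eq_value (hg : ∀ s, Integrable (g s) μ)
    (hgm : ∀ s, StronglyMeasurable[ℱ s] (g s)) {t : ℕ} (ht : t ≤ T) :
    ∃ τ : Ω → ℕ, IsStoppingTime ℱ (fun ω => (τ ω : WithTop ℕ)) ∧
      (∀ ω, τ ω ∈ Set.Icc (t + 1) (T + 1)) ∧
      μ[runningReward g t τ | ℱ t] =ᵐ[μ] value μ ℱ T g t := by
  classical
  rcases ht.lt_or_eq with ht | rfl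
  · obtain ⟨τ, hτ, hτt, hτeq⟩ :=
      exists_condExp_runningReward_eq_value hg hgm (Nat.succ_le_of_lt ht)
    set A := {ω | 0 ≤ g (t + 1) ω + value μ ℱ T g (t + 1) ω}
    have hA : MeasurableSet[ℱ (t + 1)] A :=
      measurableSet_le stronglyMeasurable_const.measurable
        ((hgm _).add (stronglyMeasurable_value _)).measurable
    have hτA : ∀ ω, t + 1 < τ ω := fun ω => (hτt ω).1
    refine ⟨A.piecewise τ fun _ => t + 1, ?_, fun ω => ?_, ?_⟩
    · convert hτ.piecewise_of_le (isStoppingTime_const ℱ (t + 1))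
        (fun ω => WithTop.coe_le_coe.mpr (hτA ω).le) (fun _ => le_rfl) hA using 1
      ext ω
      by_cases hω : ω ∈ A <;> simp [hω]
    · by_cases hω : ω ∈ A <;> simp [hω, (hτt ω).2, (hτA ω).le]
      omega
    have hmax : A.indicator (g (t + 1) + μ[runningReward g (t + 1) τ | ℱ (t + 1)])
        =ᵐ[μ] fun ω => max (g (t + 1) ω + value μ ℱ T g (t + 1) ω) 0 := by
      filter_upwards [hτeq] with ω hω
      by_cases hωA : ω ∈ A
      · have hpos : 0 ≤ g (t + 1) ω + value μ ℱ T g (t + 1) ω := hωA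
        simp [Set.indicator_of_mem hωA, hω, max_eq_left hpos]
      · have hneg : g (t + 1) ω + value μ ℱ T g (t + 1) ω < 0 := not_le.mp hωA
        simp [Set.indicator_of_notMem hωA, max_eq_right hneg.le]
    calc μ[runningReward g t (A.piecewise τ fun _ => t + 1) | ℱ t]
        = μ[A.indicator (g (t + 1) + runningReward g (t + 1) τ) | ℱ t] := by
          rw [runningReward_piecewise hτA]
      _ =ᵐ[μ] μ[A.indicator (g (t + 1) + μ[runningReward g (t + 1) τ | ℱ (t + 1)]) | ℱ t] :=
          condExp_indicator_add_condExp (ℱ.mono t.le_succ) (ℱ.le _) hA (hgm _) (hg _)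
            (integrable_runningReward hg hτ (fun ω => (hτt ω).2) _)
      _ =ᵐ[μ] μ[fun ω => max (g (t + 1) ω + value μ ℱ T g (t + 1) ω) 0 | ℱ t] :=
          condExp_congr_ae hmax
      _ = value μ ℱ T g t := (value_of_lt ht).symm
  · refine ⟨fun _ => t + 1, isStoppingTime_const ℱ (t + 1), fun ω => by simp, ?_⟩
    rw [runningReward_of_le fun _ => le_rfl, condExp_zero, value_of_le le_rfl]
termination_by T - t

end OptimalStopping

open OptimalStopping in
theorem stmt_1_general {Ω : Type*} {m0 : MeasurableSpace Ω} (μ : Measure Ω) [IsProbabilityMeasure μ]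
    (ℱ : Filtration ℕ m0) (T : ℕ) (X R C V : ℕ → Ω → ℝ)
    (hXint : ∀ t, Integrable (X t) μ) (hXadapted : ∀ t, StronglyMeasurable[ℱ t] (X t))
    (hRint : ∀ t, Integrable (R t) μ) (hRadapted : ∀ t, StronglyMeasurable[ℱ t] (R t))
    (hRT : R T = 0)
    -- C_t is an a.e. upper bound of the family of conditional expected stopped payoffs:
    (hCub : ∀ t < T, ∀ τ : Ω → ℕ, IsStoppingTime ℱ (fun ω => (τ ω : WithTop ℕ)) →
      (∀ ω, τ ω ∈ Set.Icc (t + 1) (T + 1)) →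
      μ[fun ω => ∑ s ∈ Finset.Icc (t + 1) (τ ω - 1),
          (R (s - 1) ω - R s ω - X s ω) | ℱ t] ≤ᵐ[μ] C t)
    -- and it is a.e. less than or equal to any other a.e. upper bound:
    (hClub : ∀ t < T, ∀ U : Ω → ℝ,
      (∀ τ : Ω → ℕ, IsStoppingTime ℱ (fun ω => (τ ω : WithTop ℕ)) → (∀ ω, τ ω ∈ Set.Icc (t + 1) (T + 1)) →
        μ[fun ω => ∑ s ∈ Finset.Icc (t + 1) (τ ω - 1),
            (R (s - 1) ω - R s ω - X s ω) | ℱ t] ≤ᵐ[μ] U) →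
      C t ≤ᵐ[μ] U)
    (hV : ∀ t < T, V t = fun ω => R t ω - C t ω) (hVT : V T = 0) :
    ∀ t < T, C t =ᵐ[μ]
      μ[fun ω => max (R t ω - X (t + 1) ω - V (t + 1) ω) 0 | ℱ t] := by
  set g : ℕ → Ω → ℝ := fun s ω => R (s - 1) ω - R s ω - X s ω
  have hg (s : ℕ) : Integrable (g s) μ := ((hRint _).sub (hRint s)).sub (hXint s)
  have hgm (s : ℕ) : StronglyMeasurable[ℱ s] (g s) :=
    (((hRadapted _).mono (ℱ.mono s.pred_le)).sub (hRadapted s)).sub (hXadapted s)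
  have hC (t : ℕ) (ht : t < T) : C t =ᵐ[μ] value μ ℱ T g t := by
    obtain ⟨τ, hτ, hτt, hτeq⟩ := exists_condExp_runningReward_eq_value hg hgm ht.le
    have hle : C t ≤ᵐ[μ] value μ ℱ T g t := hClub t ht _ fun σ hσ hσt =>
      condExp_runningReward_le_value hg hgm t hσ fun ω => (hσt ω).2
    exact hle.antisymm (hτeq.symm.le.trans (hCub t ht τ hτ hτt))
  intro t ht
  refine (hC t ht).trans ?_
  rw [value_of_lt ht]
  refine condExp_congr_ae ?_
  rcases (show t + 1 ≤ T from ht).lt_or_eq with h | h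
  · filter_upwards [hC (t + 1) h] with ω hω
    simp only [g, hV _ h, hω, Nat.add_sub_cancel]
    congr 1
    ring
  · subst h
    simp [g, value_of_le, hRT, hVT]

/-- The value `C_t`, defined as the essential supremum over stopping times
`τ ∈ S_{t+1,T+1}` of `E^Q_t[Σ_{s=t+1}^{τ-1} (R_{s-1} - R_s - X_s)]` (here characterized
as the a.e.-least a.e.-upper bound of this family), with `C_T = 0`, satisfies the
backward recursion `C_t = E^Q_t[(R_t - X_{t+1} - V_{t+1})_+]` where `V_t := R_t - C_t`
for `t < T` and `V_T := 0`. -/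
theorem stmt_1 {Ω : Type*} {m0 : MeasurableSpace Ω} (μ : Measure Ω) [IsProbabilityMeasure μ]
    (ℱ : Filtration ℕ m0) (T : ℕ) (X R C V : ℕ → Ω → ℝ)
    (hXint : ∀ t, Integrable (X t) μ) (hXadapted : ∀ t, StronglyMeasurable[ℱ t] (X t))
    (hRint : ∀ t, Integrable (R t) μ) (hRadapted : ∀ t, StronglyMeasurable[ℱ t] (R t))
    (hRT : R T = 0)
    -- C_t is an a.e. upper bound of the family of conditional expected stopped payoffs:
    (hCub : ∀ t < T, ∀ τ : Ω → ℕ, IsStoppingTime ℱ (fun ω => (τ ω : WithTop ℕ)) →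
      (∀ ω, τ ω ∈ Set.Icc (t + 1) (T + 1)) →
      μ[fun ω => ∑ s ∈ Finset.Icc (t + 1) (τ ω - 1),
          (R (s - 1) ω - R s ω - X s ω) | ℱ t] ≤ᵐ[μ] C t)
    -- and it is a.e. less than or equal to any other a.e. upper bound:
    (hClub : ∀ t < T, ∀ U : Ω → ℝ,
      (∀ τ : Ω → ℕ, IsStoppingTime ℱ (fun ω => (τ ω : WithTop ℕ)) → (∀ ω, τ ω ∈ Set.Icc (t + 1) (T + 1)) →
        μ[fun ω => ∑ s ∈ Finset.Icc (t + 1) (τ ω - 1),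
            (R (s - 1) ω - R s ω - X s ω) | ℱ t] ≤ᵐ[μ] U) →
      C t ≤ᵐ[μ] U)
    (hCT : C T = 0)
    (hV : ∀ t < T, V t = fun ω => R t ω - C t ω) (hVT : V T = 0) :
    ∀ t < T, C t =ᵐ[μ]
      μ[fun ω => max (R t ω - X (t + 1) ω - V (t + 1) ω) 0 | ℱ t] :=
  stmt_1_general μ ℱ T X R C V hXint hXadapted hRint hRadapted hRT hCub hClub hV hVT
end

section
/- For t ∈ {0,...,T-1}, the value V_t := essinf over stopping times τ ∈ S_{t+1,T+1} of E^Q_t[ Σ_{s=t+1}^{τ-1} X_s + R_{τ-1} ] (with V_T := 0) satisfies the backward recursion V_t = R_t - E^Q_t[ (R_t - X_{t+1} - V_{t+1})_+ ]. -/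
open MeasureTheory Finset

/-!
Backward induction. Let `W_T = 0` and `W_t = E_t[min(R_t, X_{t+1} + W_{t+1})]` (`dpValue`). For
a stopping time `τ ≥ t + 1` the event `{τ = t + 1}` is `ℱ_{t+1}`-measurable; on it the payoff
seen from `t` is `R_t`, off it the payoff is `X_{t+1}` plus the payoff seen from `t + 1`.
Conditioning on `ℱ_{t+1}` and using the tower property, induction gives `W_t ≤ E_t[payoff of τ]`
for every `τ`, with equality for the rule `dpStop` that stops at the first `s > t` with
`R_{s-1} ≤ X_s + W_s`. Hence `W_t` is the essential infimum `V_t`, and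
`min(a, b) = a - (a - b)_+` turns the recursion into the stated one.
-/

section

variable {Ω : Type*} {m0 : MeasurableSpace Ω}

theorem min_eq_sub_max_sub_zero {α : Type*} [AddCommGroup α] [LinearOrder α]
    [IsOrderedAddMonoid α] (a b : α) : min a b = a - max (a - b) 0 := by
  rcases le_total a b with h | h
  · rw [min_eq_left h, max_eq_right (sub_nonpos.2 h), sub_zero]
  · rw [min_eq_right h, max_eq_left (sub_nonneg.2 h), sub_sub_cancel]

theorem MeasureTheory.condExp_piecewise {E : Type*} [NormedAddCommGroup E] [NormedSpace ℝ E]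
    [CompleteSpace E] {μ : Measure Ω} {m : MeasurableSpace Ω} (hm : m ≤ m0) {s : Set Ω}
    [DecidablePred (· ∈ s)] {f g : Ω → E} (hf : Integrable f μ) (hg : Integrable g μ)
    (hs : MeasurableSet[m] s) :
    μ[s.piecewise f g | m] =ᵐ[μ] s.piecewise (μ[f | m]) (μ[g | m]) := by
  rw [← Set.indicator_add_compl_eq_piecewise, ← Set.indicator_add_compl_eq_piecewise]
  exact (condExp_add (hf.indicator (hm _ hs)) (hg.indicator (hm _ hs.compl)) m).trans
    ((condExp_indicator hf hs).add (condExp_indicator hg hs.compl))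

theorem MeasureTheory.IsStoppingTime.measurableSet_eq_nat {ℱ : Filtration ℕ m0} {τ : Ω → ℕ}
    (hτ : IsStoppingTime ℱ (fun ω => (τ ω : WithTop ℕ))) (n : ℕ) :
    MeasurableSet[ℱ n] {ω | τ ω = n} := by
  convert hτ.measurableSet_eq n using 1
  ext ω; simp

theorem MeasureTheory.IsStoppingTime.max_const_nat {ℱ : Filtration ℕ m0} {τ : Ω → ℕ}
    (hτ : IsStoppingTime ℱ (fun ω => (τ ω : WithTop ℕ))) (n : ℕ) :
    IsStoppingTime ℱ (fun ω => (max (τ ω) n : ℕ)) := by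
  refine (congrArg (IsStoppingTime ℱ) ?_).mp (hτ.max_const n)
  funext ω; exact (WithTop.coe_max (τ ω) n).symm

theorem MeasureTheory.condExp_min_eq_sub_condExp_max {μ : Measure Ω} {m : MeasurableSpace Ω}
    (hm : m ≤ m0) [SigmaFinite (μ.trim hm)] {f g : Ω → ℝ} (hf : StronglyMeasurable[m] f)
    (hfi : Integrable f μ) (hgi : Integrable g μ) :
    μ[fun ω => min (f ω) (g ω) | m] =ᵐ[μ] fun ω => f ω - μ[fun ω => max (f ω - g ω) 0 | m] ω := by
  simp_rw [min_eq_sub_max_sub_zero]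
  have hmax : Integrable (fun ω => max (f ω - g ω) 0) μ :=
    (hfi.sub hgi).sup (integrable_zero _ _ _)
  have := condExp_sub hfi hmax m
  rwa [condExp_of_stronglyMeasurable hm hf hfi] at this

end

namespace OptimalStopping

variable {Ω : Type*} {m0 : MeasurableSpace Ω}

section Gain

variable (X R : ℕ → Ω → ℝ)

def gain (t n : ℕ) (ω : Ω) : ℝ := (∑ s ∈ Icc (t + 1) (n - 1), X s ω) + R (n - 1) ω

theorem gain_self_succ (t : ℕ) (ω : Ω) : gain X R t (t + 1) ω = R t ω := by
  simp [gain]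

theorem gain_of_succ_lt {t n : ℕ} (h : t + 1 < n) (ω : Ω) :
    gain X R t n ω = X (t + 1) ω + gain X R (t + 1) n ω := by
  rw [gain, gain, ← insert_Icc_add_one_left_eq_Icc (by omega : t + 1 ≤ n - 1),
    sum_insert (by simp), add_assoc]

variable {X R}

theorem integrable_gain {μ : Measure Ω} (hX : ∀ s, Integrable (X s) μ)
    (hR : ∀ s, Integrable (R s) μ) (t n : ℕ) : Integrable (gain X R t n) μ :=
  (integrable_finsetSum _ fun s _ => hX s).add (hR _)

theorem integrable_gain_stopped {μ : Measure Ω} {ℱ : Filtration ℕ m0}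
    (hX : ∀ s, Integrable (X s) μ) (hR : ∀ s, Integrable (R s) μ) (t : ℕ) {τ : Ω → ℕ}
    (hτ : IsStoppingTime ℱ (fun ω => (τ ω : WithTop ℕ))) {N : ℕ} (hτN : ∀ ω, τ ω ≤ N) :
    Integrable (fun ω => gain X R t (τ ω) ω) μ :=
  integrable_stoppedValue ℕ hτ (integrable_gain hX hR t) (N := N) fun ω =>
    WithTop.coe_le_coe.mpr (hτN ω)

theorem gain_terminal {T : ℕ} (hRT : R T = 0) {τ : Ω → ℕ}
    (hτ : ∀ ω, τ ω ∈ Set.Icc (T + 1) (T + 1)) :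
    (fun ω => gain X R T (τ ω) ω) = 0 := by
  ext ω
  rw [le_antisymm (hτ ω).2 (hτ ω).1, gain_self_succ, hRT]

theorem condExp_gain_succ {μ : Measure Ω} [IsFiniteMeasure μ] {ℱ : Filtration ℕ m0}
    (hX : ∀ s, Integrable (X s) μ) (hXad : StronglyAdapted ℱ X)
    (hR : ∀ s, Integrable (R s) μ) (hRad : StronglyAdapted ℱ R) {t N : ℕ} {τ σ : Ω → ℕ}
    (hτ : IsStoppingTime ℱ (fun ω => (τ ω : WithTop ℕ))) (hτt : ∀ ω, t + 1 ≤ τ ω)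
    (hσ : IsStoppingTime ℱ (fun ω => (σ ω : WithTop ℕ))) (hσN : ∀ ω, σ ω ≤ N)
    (hστ : ∀ ω, τ ω ≠ t + 1 → σ ω = τ ω) :
    μ[fun ω => gain X R t (τ ω) ω | ℱ (t + 1)] =ᵐ[μ] {ω | τ ω = t + 1}.piecewise (R t)
      (X (t + 1) + μ[fun ω => gain X R (t + 1) (σ ω) ω | ℱ (t + 1)]) := by
  have hσint := integrable_gain_stopped hX hR (t + 1) hσ hσN
  have hsplit : (fun ω => gain X R t (τ ω) ω) = {ω | τ ω = t + 1}.piecewise (R t)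
      (X (t + 1) + fun ω => gain X R (t + 1) (σ ω) ω) := by
    ext ω
    by_cases h : τ ω = t + 1
    · simp [h, gain_self_succ]
    · simp [h, hστ ω h, gain_of_succ_lt X R (lt_of_le_of_ne (hτt ω) (Ne.symm h))]
  have hRt : μ[R t | ℱ (t + 1)] = R t :=
    condExp_of_stronglyMeasurable _ (hRad.stronglyMeasurable_le t.le_succ) (hR t)
  have hXt : μ[X (t + 1) | ℱ (t + 1)] = X (t + 1) :=
    condExp_of_stronglyMeasurable _ (hXad (t + 1)) (hX (t + 1))
  rw [hsplit]
  filter_upwards [condExp_piecewise (ℱ.le _) (hR t) ((hX (t + 1)).add hσint)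
    (hτ.measurableSet_eq_nat (t + 1)), condExp_add (hX (t + 1)) hσint (ℱ (t + 1))]
    with ω hpw hadd
  by_cases h : τ ω = t + 1
  · simp [hpw, h, hRt]
  · simp [hpw, h, hadd, hXt]

end Gain

section DynamicProgramming

variable (μ : Measure Ω) (ℱ : Filtration ℕ m0) (T : ℕ) (X R : ℕ → Ω → ℝ)

noncomputable def dpValue (t : ℕ) : Ω → ℝ :=
  if t < T then μ[fun ω => min (R t ω) (X (t + 1) ω + dpValue (t + 1) ω) | ℱ t] else 0
termination_by T - t

noncomputable def dpStop (t : ℕ) (ω : Ω) : ℕ :=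
  if t < T then
    if R t ω ≤ X (t + 1) ω + dpValue μ ℱ T X R (t + 1) ω then t + 1 else dpStop (t + 1) ω
  else T + 1
termination_by T - t

variable {μ ℱ T X R}

theorem dpValue_of_lt {t : ℕ} (ht : t < T) : dpValue μ ℱ T X R t
    = μ[fun ω => min (R t ω) (X (t + 1) ω + dpValue μ ℱ T X R (t + 1) ω) | ℱ t] := by
  rw [dpValue, if_pos ht]

theorem dpValue_self : dpValue μ ℱ T X R T = 0 := by
  rw [dpValue, if_neg (lt_irrefl T)]

theorem stronglyMeasurable_dpValue (t : ℕ) : StronglyMeasurable[ℱ t] (dpValue μ ℱ T X R t) := by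
  rw [dpValue]
  split_ifs
  exacts [stronglyMeasurable_condExp, stronglyMeasurable_zero]

theorem integrable_dpValue (t : ℕ) : Integrable (dpValue μ ℱ T X R t) μ := by
  rw [dpValue]
  split_ifs
  exacts [integrable_condExp, integrable_zero _ _ _]

theorem dpStop_of_lt {t : ℕ} (ht : t < T) (ω : Ω) : dpStop μ ℱ T X R t ω =
    if R t ω ≤ X (t + 1) ω + dpValue μ ℱ T X R (t + 1) ω then t + 1
    else dpStop μ ℱ T X R (t + 1) ω := by
  rw [dpStop, if_pos ht]

theorem dpStop_self (ω : Ω) : dpStop μ ℱ T X R T ω = T + 1 := by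
  rw [dpStop, if_neg (lt_irrefl T)]

theorem dpStop_mem {t : ℕ} (ht : t ≤ T) (ω : Ω) :
    dpStop μ ℱ T X R t ω ∈ Set.Icc (t + 1) (T + 1) := by
  induction ht using Nat.decreasingInduction with
  | self => simp [dpStop_self]
  | of_succ t ht ih =>
    rw [dpStop_of_lt ht]
    split_ifs
    · exact ⟨le_rfl, by omega⟩
    · exact ⟨by have := ih.1; omega, ih.2⟩

theorem dpStop_eq_add_one_iff {t : ℕ} (ht : t < T) {ω : Ω} :
    dpStop μ ℱ T X R t ω = t + 1 ↔ R t ω ≤ X (t + 1) ω + dpValue μ ℱ T X R (t + 1) ω := by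
  rw [dpStop_of_lt ht]
  split_ifs with h
  · exact iff_of_true rfl h
  · have := (dpStop_mem (μ := μ) (ℱ := ℱ) (X := X) (R := R) (t := t + 1) ht ω).1
    exact iff_of_false (by omega) h

theorem dpStop_of_ne {t : ℕ} (ht : t < T) {ω : Ω} (h : dpStop μ ℱ T X R t ω ≠ t + 1) :
    dpStop μ ℱ T X R t ω = dpStop μ ℱ T X R (t + 1) ω := by
  rw [dpStop_of_lt ht, if_neg (mt (dpStop_eq_add_one_iff ht).2 h)]

theorem isStoppingTime_dpStop (hXad : StronglyAdapted ℱ X) (hRad : StronglyAdapted ℱ R) {t : ℕ}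
    (ht : t ≤ T) : IsStoppingTime ℱ (fun ω => (dpStop μ ℱ T X R t ω : WithTop ℕ)) := by
  induction ht using Nat.decreasingInduction with
  | self => simpa [dpStop_self] using isStoppingTime_const ℱ (T + 1)
  | of_succ t ht ih =>
    set B := {ω | R t ω ≤ X (t + 1) ω + dpValue μ ℱ T X R (t + 1) ω}
    have hB : MeasurableSet[ℱ (t + 1)] B :=
      measurableSet_le (hRad.stronglyMeasurable_le t.le_succ).measurable
        ((hXad (t + 1)).add (stronglyMeasurable_dpValue (t + 1))).measurable
    have hpw : (fun ω => (dpStop μ ℱ T X R t ω : WithTop ℕ))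
        = B.piecewise (fun _ => ((t + 1 : ℕ) : WithTop ℕ))
          (fun ω => (dpStop μ ℱ T X R (t + 1) ω : WithTop ℕ)) := by
      ext ω
      by_cases h : R t ω ≤ X (t + 1) ω + dpValue μ ℱ T X R (t + 1) ω <;>
        simp [B, Set.piecewise, dpStop_of_lt ht, h]
    rw [hpw]
    exact (isStoppingTime_const ℱ (t + 1)).piecewise_of_le ih (fun _ => le_rfl)
      (fun ω => WithTop.coe_le_coe.mpr
        (Nat.le_of_succ_le (dpStop_mem (μ := μ) (ℱ := ℱ) (X := X) (R := R) ht ω).1)) hB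

theorem dpValue_le_condExp_gain [IsFiniteMeasure μ] (hX : ∀ s, Integrable (X s) μ)
    (hXad : StronglyAdapted ℱ X) (hR : ∀ s, Integrable (R s) μ) (hRad : StronglyAdapted ℱ R)
    (hRT : R T = 0) {t : ℕ} (ht : t ≤ T) {τ : Ω → ℕ}
    (hτ : IsStoppingTime ℱ (fun ω => (τ ω : WithTop ℕ)))
    (hτmem : ∀ ω, τ ω ∈ Set.Icc (t + 1) (T + 1)) :
    dpValue μ ℱ T X R t ≤ᵐ[μ] μ[fun ω => gain X R t (τ ω) ω | ℱ t] := by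
  induction ht using Nat.decreasingInduction generalizing τ with
  | self => rw [dpValue_self, gain_terminal hRT hτmem, condExp_zero]
  | of_succ t ht ih =>
    have hIH := ih (hτ.max_const_nat (t + 2))
      fun ω => ⟨le_max_right _ _, max_le (hτmem ω).2 (by omega)⟩
    have hnext : (fun ω => min (R t ω) (X (t + 1) ω + dpValue μ ℱ T X R (t + 1) ω))
        ≤ᵐ[μ] μ[fun ω => gain X R t (τ ω) ω | ℱ (t + 1)] := by
      filter_upwards [condExp_gain_succ hX hXad hR hRad hτ (fun ω => (hτmem ω).1)
        (hτ.max_const_nat (t + 2)) (fun ω => max_le_max_right _ (hτmem ω).2)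
        (fun ω h => max_eq_left (by have := (hτmem ω).1; omega)), hIH] with ω hstep hle
      by_cases h : τ ω = t + 1
      · simp [hstep, h]
      · simp [hstep, h, hle]
    rw [dpValue_of_lt ht]
    exact (condExp_mono ((hR t).inf ((hX (t + 1)).add (integrable_dpValue (t + 1))))
      integrable_condExp hnext).trans (condExp_condExp_of_le (ℱ.mono t.le_succ) (ℱ.le _)).le

theorem condExp_gain_dpStop [IsFiniteMeasure μ] (hX : ∀ s, Integrable (X s) μ)
    (hXad : StronglyAdapted ℱ X) (hR : ∀ s, Integrable (R s) μ) (hRad : StronglyAdapted ℱ R)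
    (hRT : R T = 0) {t : ℕ} (ht : t ≤ T) :
    μ[fun ω => gain X R t (dpStop μ ℱ T X R t ω) ω | ℱ t] =ᵐ[μ] dpValue μ ℱ T X R t := by
  induction ht using Nat.decreasingInduction with
  | self => rw [dpValue_self, gain_terminal hRT (dpStop_mem le_rfl), condExp_zero]
  | of_succ t ht ih =>
    have hnext : μ[fun ω => gain X R t (dpStop μ ℱ T X R t ω) ω | ℱ (t + 1)]
        =ᵐ[μ] fun ω => min (R t ω) (X (t + 1) ω + dpValue μ ℱ T X R (t + 1) ω) := by
      filter_upwards [condExp_gain_succ hX hXad hR hRad (isStoppingTime_dpStop hXad hRad ht.le)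
        (fun ω => (dpStop_mem ht.le ω).1) (isStoppingTime_dpStop hXad hRad ht)
        (fun ω => (dpStop_mem ht ω).2) (fun ω h => (dpStop_of_ne ht h).symm), ih]
        with ω hstep heq
      rw [hstep]
      by_cases h : dpStop μ ℱ T X R t ω = t + 1
      · simp [h, (dpStop_eq_add_one_iff ht).1 h]
      · simp [h, heq, le_of_not_ge (mt (dpStop_eq_add_one_iff ht).2 h)]
    rw [dpValue_of_lt ht]
    exact (condExp_condExp_of_le (ℱ.mono t.le_succ) (ℱ.le _)).symm.trans (condExp_congr_ae hnext)

end DynamicProgramming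

end OptimalStopping

open OptimalStopping in
/-- The value `V_t`, defined as the essential infimum over stopping times
`τ ∈ S_{t+1,T+1}` of `E^Q_t[Σ_{s=t+1}^{τ-1} X_s + R_{τ-1}]` (here characterized as the
a.e.-greatest a.e.-lower bound of this family), with `V_T = 0`, satisfies the backward
recursion `V_t = R_t - E^Q_t[(R_t - X_{t+1} - V_{t+1})_+]`. -/
theorem stmt_2 {Ω : Type*} {m0 : MeasurableSpace Ω} (μ : Measure Ω) [IsProbabilityMeasure μ]
    (ℱ : Filtration ℕ m0) (T : ℕ) (X R V : ℕ → Ω → ℝ)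
    (hXint : ∀ t, Integrable (X t) μ) (hXadapted : ∀ t, StronglyMeasurable[ℱ t] (X t))
    (hRint : ∀ t, Integrable (R t) μ) (hRadapted : ∀ t, StronglyMeasurable[ℱ t] (R t))
    (hRT : R T = 0)
    -- V_t is an a.e. lower bound of the family of conditional expected stopped payoffs:
    (hVlb : ∀ t < T, ∀ τ : Ω → ℕ, IsStoppingTime ℱ (fun ω => (τ ω : WithTop ℕ)) →
      (∀ ω, τ ω ∈ Set.Icc (t + 1) (T + 1)) →
      V t ≤ᵐ[μ] μ[fun ω => (∑ s ∈ Finset.Icc (t + 1) (τ ω - 1), X s ω)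
          + R (τ ω - 1) ω | ℱ t])
    -- and it is a.e. greater than or equal to any other a.e. lower bound:
    (hVglb : ∀ t < T, ∀ U : Ω → ℝ,
      (∀ τ : Ω → ℕ, IsStoppingTime ℱ (fun ω => (τ ω : WithTop ℕ)) → (∀ ω, τ ω ∈ Set.Icc (t + 1) (T + 1)) →
        U ≤ᵐ[μ] μ[fun ω => (∑ s ∈ Finset.Icc (t + 1) (τ ω - 1), X s ω)
            + R (τ ω - 1) ω | ℱ t]) →
      U ≤ᵐ[μ] V t)
    (hVT : V T = 0) :
    ∀ t < T, V t =ᵐ[μ]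
      fun ω => R t ω - (μ[fun ω' => max (R t ω' - X (t + 1) ω' - V (t + 1) ω') 0 | ℱ t]) ω := by
  have hV : ∀ t ≤ T, V t =ᵐ[μ] dpValue μ ℱ T X R t := by
    intro t ht
    rcases ht.lt_or_eq with ht | rfl
    · refine Filter.EventuallyLE.antisymm ?_ (hVglb t ht _ fun τ hτ hτmem =>
        dpValue_le_condExp_gain hXint hXadapted hRint hRadapted hRT ht.le hτ hτmem)
      exact (hVlb t ht _ (isStoppingTime_dpStop hXadapted hRadapted ht.le)
        (dpStop_mem ht.le)).trans
        (condExp_gain_dpStop hXint hXadapted hRint hRadapted hRT ht.le).le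
    · rw [hVT, dpValue_self]
  intro t ht
  have hnext : (fun ω => max (R t ω - (X (t + 1) ω + dpValue μ ℱ T X R (t + 1) ω)) 0)
      =ᵐ[μ] fun ω => max (R t ω - X (t + 1) ω - V (t + 1) ω) 0 := by
    filter_upwards [hV (t + 1) ht] with ω hω
    rw [hω, sub_add_eq_sub_sub]
  calc V t =ᵐ[μ] dpValue μ ℱ T X R t := hV t ht.le
    _ = μ[fun ω => min (R t ω) (X (t + 1) ω + dpValue μ ℱ T X R (t + 1) ω) | ℱ t] :=
      dpValue_of_lt ht
    _ =ᵐ[μ] fun ω => R t ω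
        - μ[fun ω => max (R t ω - (X (t + 1) ω + dpValue μ ℱ T X R (t + 1) ω)) 0 | ℱ t] ω :=
      condExp_min_eq_sub_condExp_max (ℱ.le t) (hRadapted t) (hRint t)
        ((hXint (t + 1)).add (integrable_dpValue (t + 1)))
    _ =ᵐ[μ] _ := by
      filter_upwards [condExp_congr_ae (m := ℱ t) hnext] with ω hω
      rw [hω]
end

section
/- The stopping times τ*_t := inf{ s ∈ {t+1,...,T} : R_{s-1} - X_s - V_s < 0 } ∧ (T+1) are optimal: E^Q_t[ Σ_{s=t+1}^{τ*_t - 1} X_s + R_{τ*_t - 1} ] = essinf over τ ∈ S_{t+1,T+1} of E^Q_t[ Σ_{s=t+1}^{τ-1} X_s + R_{τ-1} ]. -/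
/-!
Backward induction on `t`. Conditioning on `ℱ (t + 1)` splits the cost of any admissible `τ` into
`R t` on `{τ = t + 1}` and `X (t + 1)` plus the cost of a stopping time in `S_{t+2,T+1}` elsewhere;
by induction the latter has conditional expectation at least `V (t + 1)`, so the cost dominates
`min (R t) (X (t + 1) + V (t + 1))`, whose `ℱ t`-conditional expectation is `V t` by the
recursion. The first entry time `τ*_t` stops at `t + 1` exactly when `R t < X (t + 1) + V (t + 1)`
and otherwise continues as `τ*_{t+1}`, so it attains this minimum and its cost has conditional
expectation `V t`.
-/

open MeasureTheory Finset

namespace OptimalStopping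

lemma condExp_piecewise {Ω : Type*} {m m0 : MeasurableSpace Ω} {μ : Measure Ω} (hm : m ≤ m0)
    {s : Set Ω} [DecidablePred (· ∈ s)] {f g : Ω → ℝ} (hf : Integrable f μ) (hg : Integrable g μ)
    (hs : MeasurableSet[m] s) :
    μ[s.piecewise f g | m] =ᵐ[μ] s.piecewise (μ[f | m]) (μ[g | m]) := by
  rw [← Set.indicator_add_compl_eq_piecewise, ← Set.indicator_add_compl_eq_piecewise]
  filter_upwards [condExp_add (hf.indicator (hm _ hs)) (hg.indicator (hm _ hs.compl)) m,
    condExp_indicator hf hs, condExp_indicator hg hs.compl] with ω h1 h2 h3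
  simp only [Pi.add_apply, h1, h2, h3]

variable {Ω : Type*} {m0 : MeasurableSpace Ω}

noncomputable def firstEntry (E : ℕ → Set Ω) (a b : ℕ) (ω : Ω) : ℕ :=
  sInf ({s | a ≤ s ∧ s ≤ b ∧ ω ∈ E s} ∪ {b + 1})

section FirstEntry

variable {E : ℕ → Set Ω} {a b n : ℕ} {ω : Ω}

lemma firstEntry_le_succ : firstEntry E a b ω ≤ b + 1 :=
  Nat.sInf_le (Or.inr rfl)

lemma le_firstEntry (h : a ≤ b + 1) : a ≤ firstEntry E a b ω :=
  le_csInf ⟨b + 1, Or.inr rfl⟩ fun _ hs => hs.elim (·.1) fun hs => (Set.mem_singleton_iff.1 hs) ▸ h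

lemma firstEntry_le_iff (hn : n ≤ b) : firstEntry E a b ω ≤ n ↔ ∃ s ∈ Set.Icc a n, ω ∈ E s := by
  constructor
  · intro h
    rcases Nat.sInf_mem (s := {s | a ≤ s ∧ s ≤ b ∧ ω ∈ E s} ∪ {b + 1}) ⟨b + 1, Or.inr rfl⟩
      with hs | hs
    · exact ⟨_, ⟨hs.1, h⟩, hs.2.2⟩
    · rw [Set.mem_singleton_iff] at hs
      rw [firstEntry, hs] at h
      omega
  · rintro ⟨s, ⟨has, hsn⟩, hs⟩
    exact (Nat.sInf_le (Or.inl ⟨has, hsn.trans hn, hs⟩)).trans hsn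

lemma firstEntry_of_mem (hab : a ≤ b) (h : ω ∈ E a) : firstEntry E a b ω = a :=
  le_antisymm (Nat.sInf_le (Or.inl ⟨le_rfl, hab, h⟩)) (le_firstEntry (by omega))

lemma firstEntry_of_notMem (h : ω ∉ E a) : firstEntry E a b ω = firstEntry E (a + 1) b ω := by
  unfold firstEntry
  congr 2
  ext s
  simp only [Set.mem_ofPred_eq]
  constructor
  · rintro ⟨has, hsb, hs⟩
    exact ⟨Nat.lt_of_le_of_ne has (by rintro rfl; exact h hs), hsb, hs⟩
  · rintro ⟨has, hsb, hs⟩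
    exact ⟨by omega, hsb, hs⟩

lemma isStoppingTime_firstEntry {ℱ : Filtration ℕ m0} (hE : ∀ s ≤ b, MeasurableSet[ℱ s] (E s)) :
    IsStoppingTime ℱ (fun ω => (firstEntry E a b ω : WithTop ℕ)) := by
  intro n
  show MeasurableSet[ℱ n] {ω | ((firstEntry E a b ω : ℕ) : WithTop ℕ) ≤ ((n : ℕ) : WithTop ℕ)}
  simp only [Nat.cast_le]
  rcases le_or_gt n b with hn | hn
  · have : {ω | firstEntry E a b ω ≤ n} = ⋃ s ∈ Finset.Icc a n, E s := by
      ext; simp [firstEntry_le_iff hn]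
    rw [this]
    exact Finset.measurableSet_biUnion _ fun s hs =>
      ℱ.mono (mem_Icc.1 hs).2 _ (hE s ((mem_Icc.1 hs).2.trans hn))
  · have : {ω | firstEntry E a b ω ≤ n} = Set.univ :=
      Set.eq_univ_of_forall fun _ => firstEntry_le_succ.trans hn
    rw [this]
    exact .univ

end FirstEntry

def payoff (X R : ℕ → Ω → ℝ) (t k : ℕ) (ω : Ω) : ℝ :=
  ∑ s ∈ Icc (t + 1) (k - 1), X s ω + R (k - 1) ω

section Payoff

variable {μ : Measure Ω} {X R : ℕ → Ω → ℝ} {t k : ℕ} {ω : Ω}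

@[simp]
lemma payoff_succ_self : payoff X R t (t + 1) ω = R t ω := by
  simp [payoff]

lemma payoff_of_succ_lt (h : t + 1 < k) :
    payoff X R t k ω = X (t + 1) ω + payoff X R (t + 1) k ω := by
  rw [payoff, payoff, ← add_sum_Ioc_eq_sum_Icc (by omega), ← Icc_add_one_left_eq_Ioc, add_assoc]

lemma integrable_payoff (hX : ∀ s, Integrable (X s) μ) (hR : ∀ s, Integrable (R s) μ) (t k : ℕ) :
    Integrable (payoff X R t k) μ :=
  (integrable_finsetSum _ fun s _ => hX s).add (hR _)

lemma integrable_payoff_comp {ℱ : Filtration ℕ m0} (hX : ∀ s, Integrable (X s) μ)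
    (hR : ∀ s, Integrable (R s) μ) {τ : Ω → ℕ} (hτ : IsStoppingTime ℱ (fun ω => (τ ω : WithTop ℕ)))
    {N : ℕ} (hτN : ∀ ω, τ ω ≤ N) :
    Integrable (fun ω => payoff X R t (τ ω) ω) μ :=
  integrable_stoppedValue ℕ hτ (integrable_payoff hX hR t) (N := N) fun ω =>
    WithTop.coe_le_coe.2 (hτN ω)

end Payoff

section OneStep

variable {μ : Measure Ω} [IsFiniteMeasure μ] {ℱ : Filtration ℕ m0} {X R : ℕ → Ω → ℝ} {t N : ℕ}

lemma condExp_payoff_eq_piecewise (hX : ∀ s, Integrable (X s) μ)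
    (hXa : StronglyMeasurable[ℱ (t + 1)] (X (t + 1))) (hR : ∀ s, Integrable (R s) μ)
    (hRa : StronglyMeasurable[ℱ t] (R t)) {A : Set Ω} [DecidablePred (· ∈ A)]
    (hA : MeasurableSet[ℱ (t + 1)] A) {σ σ' : Ω → ℕ}
    (hσ' : IsStoppingTime ℱ (fun ω => (σ' ω : WithTop ℕ))) (hσ'v : ∀ ω, σ' ω ∈ Set.Icc (t + 2) N)
    (hσ : ∀ ω, σ ω = A.piecewise (fun _ => t + 1) σ' ω) :
    μ[fun ω => payoff X R t (σ ω) ω | ℱ (t + 1)] =ᵐ[μ]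
      A.piecewise (R t) (X (t + 1) + μ[fun ω => payoff X R (t + 1) (σ' ω) ω | ℱ (t + 1)]) := by
  have hG := integrable_payoff_comp (t := t + 1) hX hR hσ' fun ω => (hσ'v ω).2
  have hpayoff : (fun ω => payoff X R t (σ ω) ω)
      = A.piecewise (R t) (X (t + 1) + fun ω => payoff X R (t + 1) (σ' ω) ω) := by
    funext ω
    by_cases hω : ω ∈ A
    · simp [hσ, hω]
    · simp [hσ, hω, payoff_of_succ_lt (by have := (hσ'v ω).1; omega : t + 1 < σ' ω)]
  rw [hpayoff]
  refine (condExp_piecewise (ℱ.le _) (hR t) ((hX _).add hG) hA).trans ?_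
  rw [condExp_of_stronglyMeasurable (ℱ.le _) (hRa.mono (ℱ.mono t.le_succ)) (hR t)]
  filter_upwards [condExp_add (hX (t + 1)) hG (ℱ (t + 1))] with ω h
  simp only [Set.piecewise, h, Pi.add_apply, condExp_of_stronglyMeasurable (ℱ.le _) hXa (hX _)]

lemma condExp_min_le_condExp_payoff (hX : ∀ s, Integrable (X s) μ)
    (hXa : StronglyMeasurable[ℱ (t + 1)] (X (t + 1))) (hR : ∀ s, Integrable (R s) μ)
    (hRa : StronglyMeasurable[ℱ t] (R t)) {v : Ω → ℝ} (hv : Integrable v μ)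
    (hv_le : ∀ σ : Ω → ℕ, IsStoppingTime ℱ (fun ω => (σ ω : WithTop ℕ)) →
      (∀ ω, σ ω ∈ Set.Icc (t + 2) N) → v ≤ᵐ[μ] μ[fun ω => payoff X R (t + 1) (σ ω) ω | ℱ (t + 1)])
    (htN : t + 2 ≤ N) {τ : Ω → ℕ} (hτ : IsStoppingTime ℱ (fun ω => (τ ω : WithTop ℕ)))
    (hτv : ∀ ω, τ ω ∈ Set.Icc (t + 1) N) :
    μ[fun ω => min (R t ω) (X (t + 1) ω + v ω) | ℱ t]
      ≤ᵐ[μ] μ[fun ω => payoff X R t (τ ω) ω | ℱ t] := by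
  classical
  set A := {ω | τ ω = t + 1}
  have hA : MeasurableSet[ℱ (t + 1)] A := by
    simpa only [← Nat.cast_withTop, Nat.cast_inj] using hτ.measurableSet_eq_of_countable (t + 1)
  have hσ : IsStoppingTime ℱ (fun ω => (max (τ ω) (t + 2) : WithTop ℕ)) := by
    simpa using hτ.max_const (t + 2)
  have hσv : ∀ ω, max (τ ω) (t + 2) ∈ Set.Icc (t + 2) N := fun ω =>
    ⟨le_max_right _ _, max_le (hτv ω).2 htN⟩
  have hτ_eq : ∀ ω, τ ω = A.piecewise (fun _ => t + 1) (fun ω => max (τ ω) (t + 2)) ω := by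
    intro ω
    by_cases hω : ω ∈ A
    · rw [Set.piecewise_eq_of_mem _ _ _ hω]
      exact hω
    · have hτω : τ ω ≠ t + 1 := hω
      rw [Set.piecewise_eq_of_notMem _ _ _ hω]
      exact (max_eq_left (by have := (hτv ω).1; omega)).symm
  have hle : (fun ω => min (R t ω) (X (t + 1) ω + v ω))
      ≤ᵐ[μ] μ[fun ω => payoff X R t (τ ω) ω | ℱ (t + 1)] := by
    filter_upwards [condExp_payoff_eq_piecewise hX hXa hR hRa hA hσ hσv hτ_eq, hv_le _ hσ hσv]
      with ω hω hvω
    rw [hω]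
    by_cases h : ω ∈ A
    · rw [Set.piecewise_eq_of_mem _ _ _ h]
      exact min_le_left _ _
    · rw [Set.piecewise_eq_of_notMem _ _ _ h, Pi.add_apply]
      exact (min_le_right _ _).trans (by linarith)
  exact (condExp_mono ((hR t).inf ((hX _).add hv)) integrable_condExp hle).trans_eq
    (condExp_condExp_of_le (ℱ.mono t.le_succ) (ℱ.le (t + 1)))

lemma condExp_payoff_eq_condExp_min (hX : ∀ s, Integrable (X s) μ)
    (hXa : StronglyMeasurable[ℱ (t + 1)] (X (t + 1))) (hR : ∀ s, Integrable (R s) μ)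
    (hRa : StronglyMeasurable[ℱ t] (R t)) {v : Ω → ℝ} (hva : StronglyMeasurable[ℱ (t + 1)] v)
    {σ σ' : Ω → ℕ} (hσ' : IsStoppingTime ℱ (fun ω => (σ' ω : WithTop ℕ)))
    (hσ'v : ∀ ω, σ' ω ∈ Set.Icc (t + 2) N)
    (hσ'_eq : μ[fun ω => payoff X R (t + 1) (σ' ω) ω | ℱ (t + 1)] =ᵐ[μ] v)
    (hσ : ∀ ω, σ ω = if R t ω - X (t + 1) ω - v ω < 0 then t + 1 else σ' ω) :
    μ[fun ω => payoff X R t (σ ω) ω | ℱ t]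
      =ᵐ[μ] μ[fun ω => min (R t ω) (X (t + 1) ω + v ω) | ℱ t] := by
  set A := {ω | R t ω - X (t + 1) ω - v ω < 0}
  have hA : MeasurableSet[ℱ (t + 1)] A :=
    (((hRa.mono (ℱ.mono t.le_succ)).sub hXa).sub hva).measurableSet_lt stronglyMeasurable_const
  have hmin : μ[fun ω => payoff X R t (σ ω) ω | ℱ (t + 1)]
      =ᵐ[μ] fun ω => min (R t ω) (X (t + 1) ω + v ω) := by
    filter_upwards [condExp_payoff_eq_piecewise hX hXa hR hRa hA hσ' hσ'v hσ, hσ'_eq]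
      with ω hω hvω
    rw [hω]
    by_cases h : ω ∈ A
    · rw [Set.piecewise_eq_of_mem _ _ _ h]
      exact (min_eq_left (by linarith [show R t ω - X (t + 1) ω - v ω < 0 from h])).symm
    · rw [Set.piecewise_eq_of_notMem _ _ _ h, Pi.add_apply, hvω]
      have hge : 0 ≤ R t ω - X (t + 1) ω - v ω := not_lt.1 h
      exact (min_eq_right (by linarith)).symm
  exact (condExp_condExp_of_le (ℱ.mono t.le_succ) (ℱ.le _)).symm.trans (condExp_congr_ae hmin)

end OneStep

def IsValueProcess (μ : Measure Ω) (ℱ : Filtration ℕ m0) (T : ℕ) (X R V : ℕ → Ω → ℝ) : Prop :=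
  V T = 0 ∧ ∀ t < T, V t = fun ω =>
    R t ω - (μ[fun ω' => max (R t ω' - X (t + 1) ω' - V (t + 1) ω') 0 | ℱ t]) ω

def stoppingRegion (X R V : ℕ → Ω → ℝ) (s : ℕ) : Set Ω :=
  {ω | R (s - 1) ω - X s ω - V s ω < 0}

section ValueProcess

variable {μ : Measure Ω} {ℱ : Filtration ℕ m0} {T : ℕ} {X R V : ℕ → Ω → ℝ}

lemma IsValueProcess.stronglyMeasurable (hV : IsValueProcess μ ℱ T X R V)
    (hRa : ∀ t, StronglyMeasurable[ℱ t] (R t)) {s : ℕ} (hs : s ≤ T) :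
    StronglyMeasurable[ℱ s] (V s) := by
  rcases hs.lt_or_eq with hs | rfl
  · rw [hV.2 s hs]
    exact (hRa s).sub stronglyMeasurable_condExp
  · rw [hV.1]
    exact stronglyMeasurable_const

lemma IsValueProcess.integrable (hV : IsValueProcess μ ℱ T X R V)
    (hR : ∀ t, Integrable (R t) μ) {s : ℕ} (hs : s ≤ T) : Integrable (V s) μ := by
  rcases hs.lt_or_eq with hs | rfl
  · rw [hV.2 s hs]
    exact (hR s).sub integrable_condExp
  · rw [hV.1]
    exact integrable_zero _ _ _

lemma IsValueProcess.ae_eq_condExp_min [IsFiniteMeasure μ] (hV : IsValueProcess μ ℱ T X R V)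
    (hX : ∀ t, Integrable (X t) μ) (hR : ∀ t, Integrable (R t) μ)
    (hRa : ∀ t, StronglyMeasurable[ℱ t] (R t)) {t : ℕ} (ht : t < T) :
    V t =ᵐ[μ] μ[fun ω => min (R t ω) (X (t + 1) ω + V (t + 1) ω) | ℱ t] := by
  have hmax : Integrable (fun ω => max (R t ω - X (t + 1) ω - V (t + 1) ω) 0) μ :=
    (((hR t).sub (hX _)).sub (hV.integrable hR ht)).pos_part
  have hmin : (fun ω => min (R t ω) (X (t + 1) ω + V (t + 1) ω))
      = R t - fun ω => max (R t ω - X (t + 1) ω - V (t + 1) ω) 0 := by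
    funext ω
    simp only [Pi.sub_apply]
    grind
  rw [hmin, hV.2 t ht]
  filter_upwards [condExp_sub (hR t) hmax (ℱ t)] with ω h
  rw [h, Pi.sub_apply, condExp_of_stronglyMeasurable (ℱ.le t) (hRa t) (hR t)]

lemma measurableSet_stoppingRegion (hV : IsValueProcess μ ℱ T X R V)
    (hXa : ∀ t, StronglyMeasurable[ℱ t] (X t)) (hRa : ∀ t, StronglyMeasurable[ℱ t] (R t))
    {s : ℕ} (hs : s ≤ T) : MeasurableSet[ℱ s] (stoppingRegion X R V s) :=
  ((((hRa _).mono (ℱ.mono (Nat.sub_le s 1))).sub (hXa s)).sub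
    (hV.stronglyMeasurable hRa hs)).measurableSet_lt stronglyMeasurable_const

theorem IsValueProcess.le_condExp_payoff_and_eq [IsFiniteMeasure μ]
    (hV : IsValueProcess μ ℱ T X R V)
    (hX : ∀ t, Integrable (X t) μ) (hXa : ∀ t, StronglyMeasurable[ℱ t] (X t))
    (hR : ∀ t, Integrable (R t) μ) (hRa : ∀ t, StronglyMeasurable[ℱ t] (R t)) (hRT : R T = 0)
    {t : ℕ} (ht : t ≤ T) :
    (∀ τ : Ω → ℕ, IsStoppingTime ℱ (fun ω => (τ ω : WithTop ℕ)) →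
      (∀ ω, τ ω ∈ Set.Icc (t + 1) (T + 1)) →
        V t ≤ᵐ[μ] μ[fun ω => payoff X R t (τ ω) ω | ℱ t]) ∧
    μ[fun ω => payoff X R t (firstEntry (stoppingRegion X R V) (t + 1) T ω) ω | ℱ t]
      =ᵐ[μ] V t := by
  have hE : ∀ s ≤ T, MeasurableSet[ℱ s] (stoppingRegion X R V s) :=
    fun _ => measurableSet_stoppingRegion hV hXa hRa
  induction ht using Nat.decreasingInduction with
  | self =>
    have hterminal : ∀ σ : Ω → ℕ, (∀ ω, σ ω ∈ Set.Icc (T + 1) (T + 1)) →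
        μ[fun ω => payoff X R T (σ ω) ω | ℱ T] = V T := by
      intro σ hσ
      have hσ_eq : ∀ ω, σ ω = T + 1 := fun ω => le_antisymm (hσ ω).2 (hσ ω).1
      simp only [hσ_eq, payoff_succ_self, hRT, hV.1]
      exact condExp_zero
    exact ⟨fun τ _ hτv => (hterminal τ hτv).symm.eventuallyEq.le,
      (hterminal _ fun _ => ⟨le_firstEntry le_rfl, firstEntry_le_succ⟩).eventuallyEq⟩
  | of_succ k hk ih =>
    have hVk := hV.ae_eq_condExp_min hX hR hRa hk
    refine ⟨fun τ hτ hτv => hVk.trans_le ?_, ?_⟩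
    · exact condExp_min_le_condExp_payoff hX (hXa _) hR (hRa k) (hV.integrable hR hk) ih.1
        (by omega) hτ hτv
    refine (condExp_payoff_eq_condExp_min hX (hXa _) hR (hRa k) (hV.stronglyMeasurable hRa hk)
      (isStoppingTime_firstEntry hE) (fun ω => ⟨le_firstEntry (by omega), firstEntry_le_succ⟩)
      ih.2 fun ω => ?_).trans hVk.symm
    split_ifs with h
    · exact firstEntry_of_mem hk h
    · exact firstEntry_of_notMem h

end ValueProcess

end OptimalStopping

open OptimalStopping

/-- The stopping times `τ*_t := inf{s ∈ {t+1,...,T} : R_{s-1} - X_s - V_s < 0} ∧ (T+1)`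
are optimal for the stopping problem defining `V_t`: `τ*_t` is a stopping time with
values in `{t+1,...,T+1}` and its conditional expected payoff is a.e. less than or equal
to that of any stopping time `τ ∈ S_{t+1,T+1}` (hence it attains the essential infimum).
Here `V` is defined by the backward recursion `V_T = 0`,
`V_t = R_t - E^Q_t[(R_t - X_{t+1} - V_{t+1})_+]`. -/
theorem stmt_3 {Ω : Type*} {m0 : MeasurableSpace Ω} (μ : Measure Ω) [IsProbabilityMeasure μ]
    (ℱ : Filtration ℕ m0) (T : ℕ) (X R V : ℕ → Ω → ℝ)
    (hXint : ∀ t, Integrable (X t) μ) (hXadapted : ∀ t, StronglyMeasurable[ℱ t] (X t))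
    (hRint : ∀ t, Integrable (R t) μ) (hRadapted : ∀ t, StronglyMeasurable[ℱ t] (R t))
    (hRT : R T = 0) (hVT : V T = 0)
    (hVrec : ∀ t < T, V t = fun ω =>
      R t ω - (μ[fun ω' => max (R t ω' - X (t + 1) ω' - V (t + 1) ω') 0 | ℱ t]) ω)
    (τstar : ℕ → Ω → ℕ)
    (hτstar : ∀ t, τstar t = fun ω =>
      sInf ({s : ℕ | t + 1 ≤ s ∧ s ≤ T ∧ R (s - 1) ω - X s ω - V s ω < 0} ∪ {T + 1})) :
    ∀ t < T,
      IsStoppingTime ℱ (fun ω => (τstar t ω : WithTop ℕ)) ∧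
      (∀ ω, τstar t ω ∈ Set.Icc (t + 1) (T + 1)) ∧
      (∀ τ : Ω → ℕ, IsStoppingTime ℱ (fun ω => (τ ω : WithTop ℕ)) → (∀ ω, τ ω ∈ Set.Icc (t + 1) (T + 1)) →
        μ[fun ω => (∑ s ∈ Finset.Icc (t + 1) (τstar t ω - 1), X s ω)
            + R (τstar t ω - 1) ω | ℱ t]
          ≤ᵐ[μ]
        μ[fun ω => (∑ s ∈ Finset.Icc (t + 1) (τ ω - 1), X s ω)
            + R (τ ω - 1) ω | ℱ t]) := by
  intro t ht
  have hV : IsValueProcess μ ℱ T X R V := ⟨hVT, hVrec⟩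
  obtain rfl : τstar = fun t => firstEntry (stoppingRegion X R V) (t + 1) T := funext hτstar
  obtain ⟨hle, heq⟩ := hV.le_condExp_payoff_and_eq hXint hXadapted hRint hRadapted hRT ht.le
  exact ⟨isStoppingTime_firstEntry fun _ => measurableSet_stoppingRegion hV hXadapted hRadapted,
    fun ω => ⟨le_firstEntry (by omega), firstEntry_le_succ⟩,
    fun τ hτ hτv => heq.trans_le (hle τ hτ hτv)⟩
end

section
/- The cumulative residual value process V^S_t := Σ_{s=1}^t X_s + V_t, t = 0,...,T, is a (Q, F)-submartingale; equivalently, V_t ≤ E^Q_t[ Σ_{s=t+1}^T X_s ] for all t ∈ {0,...,T}. -/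
open MeasureTheory Finset

/-!
Since `(a)_+ ≥ a` and `R_t` is `F_t`-measurable, the recursion gives
`V_t ≤ R_t - E_t[R_t - X_{t+1} - V_{t+1}] = E_t[X_{t+1} + V_{t+1}]`; adding the
`F_t`-measurable sum `Σ_{s ≤ t} X_s` is the one-step submartingale inequality. Iterating it by
the tower property up to the horizon, where `V_T = 0`, gives `V_t ≤ E_t[Σ_{s=t+1}^T X_s]`.
-/

section CondExp

variable {Ω : Type*} {m m0 : MeasurableSpace Ω} {μ : Measure Ω}

theorem condExp_add_of_stronglyMeasurable_left {E : Type*} [NormedAddCommGroup E]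
    [NormedSpace ℝ E] [CompleteSpace E] (hm : m ≤ m0) [SigmaFinite (μ.trim hm)] {f g : Ω → E}
    (hf : StronglyMeasurable[m] f) (hfi : Integrable f μ) (hgi : Integrable g μ) :
    μ[f + g | m] =ᵐ[μ] f + μ[g | m] := by
  filter_upwards [condExp_add hfi hgi m] with ω hω
  rw [hω, Pi.add_apply, Pi.add_apply, condExp_of_stronglyMeasurable hm hf hfi]

theorem sub_condExp_max_sub_zero_le_condExp (hm : m ≤ m0) [SigmaFinite (μ.trim hm)]
    {r y : Ω → ℝ} (hr : StronglyMeasurable[m] r) (hri : Integrable r μ) (hyi : Integrable y μ) :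
    r - μ[fun ω => max (r ω - y ω) 0 | m] ≤ᵐ[μ] μ[y | m] := by
  have hmono : μ[r - y | m] ≤ᵐ[μ] μ[fun ω => max (r ω - y ω) 0 | m] :=
    condExp_mono (hri.sub hyi) (hri.sub hyi).pos_part (ae_of_all _ fun ω => le_max_left _ _)
  filter_upwards [hmono, condExp_sub hri hyi m] with ω hle hsub
  rw [hsub, Pi.sub_apply, condExp_of_stronglyMeasurable hm hr hri] at hle
  rw [Pi.sub_apply]
  linarith

theorem ae_le_condExp_of_ae_le_condExp_succ {ℱ : Filtration ℕ m0} [SigmaFiniteFiltration μ ℱ]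
    {f : ℕ → Ω → ℝ} {T : ℕ} (hfT : StronglyMeasurable[ℱ T] (f T))
    (hint : ∀ t ≤ T, Integrable (f t) μ) (hstep : ∀ t < T, f t ≤ᵐ[μ] μ[f (t + 1) | ℱ t])
    {t : ℕ} (ht : t ≤ T) :
    f t ≤ᵐ[μ] μ[f T | ℱ t] := by
  induction ht using Nat.decreasingInduction with
  | self => rw [condExp_of_stronglyMeasurable (ℱ.le T) hfT (hint T le_rfl)]
  | of_succ t ht ih =>
    calc f t ≤ᵐ[μ] μ[f (t + 1) | ℱ t] := hstep t ht
      _ ≤ᵐ[μ] μ[μ[f T | ℱ (t + 1)] | ℱ t] := condExp_mono (hint _ ht) integrable_condExp ih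
      _ =ᵐ[μ] μ[f T | ℱ t] := condExp_condExp_of_le (ℱ.mono t.le_succ) (ℱ.le _)

end CondExp

section ResidualValue

variable {Ω : Type*} {m0 : MeasurableSpace Ω} {μ : Measure Ω} {ℱ : Filtration ℕ m0} {T : ℕ}
  {X R V : ℕ → Ω → ℝ}

def cumulativeResidualValue (X V : ℕ → Ω → ℝ) (t : ℕ) : Ω → ℝ :=
  fun ω => (∑ s ∈ Icc 1 t, X s ω) + V t ω

theorem stronglyMeasurable_sum_Icc (hXadapted : ∀ t, StronglyMeasurable[ℱ t] (X t)) (a t : ℕ) :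
    StronglyMeasurable[ℱ t] (fun ω => ∑ s ∈ Icc a t, X s ω) :=
  Finset.stronglyMeasurable_fun_sum _ fun s hs => (hXadapted s).mono (ℱ.mono (mem_Icc.mp hs).2)

theorem integrable_residualValue (hRint : ∀ t, Integrable (R t) μ) (hVT : V T = 0)
    (hVrec : ∀ t < T, V t = fun ω =>
      R t ω - (μ[fun ω' => max (R t ω' - X (t + 1) ω' - V (t + 1) ω') 0 | ℱ t]) ω)
    {t : ℕ} (ht : t ≤ T) : Integrable (V t) μ := by
  rcases ht.lt_or_eq with ht | rfl
  · rw [hVrec t ht]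
    exact (hRint t).sub integrable_condExp
  · rw [hVT]
    exact integrable_zero _ _ _

variable [SigmaFiniteFiltration μ ℱ]

theorem residualValue_le_condExp_succ (hXint : ∀ t, Integrable (X t) μ)
    (hRint : ∀ t, Integrable (R t) μ) (hRadapted : ∀ t, StronglyMeasurable[ℱ t] (R t))
    {t : ℕ} (hVint : Integrable (V (t + 1)) μ)
    (hVrec : V t = fun ω =>
      R t ω - (μ[fun ω' => max (R t ω' - X (t + 1) ω' - V (t + 1) ω') 0 | ℱ t]) ω) :
    V t ≤ᵐ[μ] μ[X (t + 1) + V (t + 1) | ℱ t] := by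
  have hmax : (fun ω => max (R t ω - X (t + 1) ω - V (t + 1) ω) 0)
      = fun ω => max (R t ω - (X (t + 1) + V (t + 1)) ω) 0 := by
    simp only [Pi.add_apply, sub_sub]
  rw [hVrec, hmax]
  exact sub_condExp_max_sub_zero_le_condExp (ℱ.le t) (hRadapted t) (hRint t)
    ((hXint _).add hVint)

theorem cumulativeResidualValue_le_condExp_succ (hXint : ∀ t, Integrable (X t) μ)
    (hXadapted : ∀ t, StronglyMeasurable[ℱ t] (X t))
    (hRint : ∀ t, Integrable (R t) μ) (hRadapted : ∀ t, StronglyMeasurable[ℱ t] (R t))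
    (hVT : V T = 0)
    (hVrec : ∀ t < T, V t = fun ω =>
      R t ω - (μ[fun ω' => max (R t ω' - X (t + 1) ω' - V (t + 1) ω') 0 | ℱ t]) ω)
    {t : ℕ} (ht : t < T) :
    cumulativeResidualValue X V t ≤ᵐ[μ] μ[cumulativeResidualValue X V (t + 1) | ℱ t] := by
  have hVint := integrable_residualValue hRint hVT hVrec (Nat.succ_le_of_lt ht)
  have hsplit : cumulativeResidualValue X V (t + 1)
      = (fun ω => ∑ s ∈ Icc 1 t, X s ω) + (X (t + 1) + V (t + 1)) := by
    funext ω
    simp only [cumulativeResidualValue, sum_Icc_succ_top (Nat.le_add_left 1 t), Pi.add_apply,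
      add_assoc]
  rw [hsplit]
  filter_upwards [residualValue_le_condExp_succ hXint hRint hRadapted hVint (hVrec t ht),
    condExp_add_of_stronglyMeasurable_left (ℱ.le t) (stronglyMeasurable_sum_Icc hXadapted 1 t)
      (integrable_finsetSum _ fun s _ => hXint s) ((hXint _).add hVint)] with ω hV hadd
  rw [hadd, Pi.add_apply]
  exact add_le_add_right hV _

theorem residualValue_le_condExp_sum (hXint : ∀ t, Integrable (X t) μ)
    (hXadapted : ∀ t, StronglyMeasurable[ℱ t] (X t))
    (hRint : ∀ t, Integrable (R t) μ) (hRadapted : ∀ t, StronglyMeasurable[ℱ t] (R t))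
    (hVT : V T = 0)
    (hVrec : ∀ t < T, V t = fun ω =>
      R t ω - (μ[fun ω' => max (R t ω' - X (t + 1) ω' - V (t + 1) ω') 0 | ℱ t]) ω)
    {t : ℕ} (ht : t ≤ T) :
    V t ≤ᵐ[μ] μ[fun ω => ∑ s ∈ Icc (t + 1) T, X s ω | ℱ t] := by
  have hsum_int (a b : ℕ) : Integrable (fun ω => ∑ s ∈ Icc a b, X s ω) μ :=
    integrable_finsetSum _ fun s _ => hXint s
  have hST : cumulativeResidualValue X V T
      = (fun ω => ∑ s ∈ Icc 1 t, X s ω) + fun ω => ∑ s ∈ Icc (t + 1) T, X s ω := by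
    funext ω
    simp only [cumulativeResidualValue, hVT, Pi.add_apply, Pi.zero_apply, add_zero]
    rw [Icc_add_one_left_eq_Ioc]
    -- `Icc 1 n` and `Ioc 0 n` agree definitionally
    exact (sum_Ioc_consecutive (X · ω) (Nat.zero_le t) ht).symm
  have hsub := ae_le_condExp_of_ae_le_condExp_succ (f := cumulativeResidualValue X V)
    (hST ▸ ((stronglyMeasurable_sum_Icc hXadapted 1 t).mono (ℱ.mono ht)).add
      (stronglyMeasurable_sum_Icc hXadapted _ T))
    (fun t ht => (hsum_int 1 t).add (integrable_residualValue hRint hVT hVrec ht))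
    (fun t ht => cumulativeResidualValue_le_condExp_succ hXint hXadapted hRint hRadapted hVT
      hVrec ht) ht
  rw [hST] at hsub
  filter_upwards [hsub, condExp_add_of_stronglyMeasurable_left (ℱ.le t)
    (stronglyMeasurable_sum_Icc hXadapted 1 t) (hsum_int 1 t) (hsum_int (t + 1) T)] with ω h hadd
  rw [hadd] at h
  simpa only [cumulativeResidualValue, Pi.add_apply, add_le_add_iff_left] using h

end ResidualValue

theorem stmt_4_general {Ω : Type*} {m0 : MeasurableSpace Ω} (μ : Measure Ω) [IsProbabilityMeasure μ]
    (ℱ : Filtration ℕ m0) (T : ℕ) (X R V : ℕ → Ω → ℝ)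
    (hXint : ∀ t, Integrable (X t) μ) (hXadapted : ∀ t, StronglyMeasurable[ℱ t] (X t))
    (hRint : ∀ t, Integrable (R t) μ) (hRadapted : ∀ t, StronglyMeasurable[ℱ t] (R t))
    (hVT : V T = 0)
    (hVrec : ∀ t < T, V t = fun ω =>
      R t ω - (μ[fun ω' => max (R t ω' - X (t + 1) ω' - V (t + 1) ω') 0 | ℱ t]) ω) :
    (∀ t < T,
      (fun ω => (∑ s ∈ Finset.Icc 1 t, X s ω) + V t ω) ≤ᵐ[μ]
        μ[fun ω => (∑ s ∈ Finset.Icc 1 (t + 1), X s ω) + V (t + 1) ω | ℱ t]) ∧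
    (∀ t ≤ T, V t ≤ᵐ[μ] μ[fun ω => ∑ s ∈ Finset.Icc (t + 1) T, X s ω | ℱ t]) :=
  ⟨fun _ ht => cumulativeResidualValue_le_condExp_succ hXint hXadapted hRint hRadapted hVT hVrec ht,
    fun _ ht => residualValue_le_condExp_sum hXint hXadapted hRint hRadapted hVT hVrec ht⟩

/-- The cumulative residual value process `V^S_t := Σ_{s=1}^t X_s + V_t`, `t = 0,...,T`,
is a `(Q,F)`-submartingale; equivalently, `V_t ≤ E^Q_t[Σ_{s=t+1}^T X_s]` for all
`t ∈ {0,...,T}`. Here `V` is given by `V_T = 0` and the backward recursion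
`V_t = R_t - E^Q_t[(R_t - X_{t+1} - V_{t+1})_+]`. -/
theorem stmt_4 {Ω : Type*} {m0 : MeasurableSpace Ω} (μ : Measure Ω) [IsProbabilityMeasure μ]
    (ℱ : Filtration ℕ m0) (T : ℕ) (X R V : ℕ → Ω → ℝ)
    (hXint : ∀ t, Integrable (X t) μ) (hXadapted : ∀ t, StronglyMeasurable[ℱ t] (X t))
    (hRint : ∀ t, Integrable (R t) μ) (hRadapted : ∀ t, StronglyMeasurable[ℱ t] (R t))
    (hRT : R T = 0) (hVT : V T = 0)
    (hVrec : ∀ t < T, V t = fun ω =>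
      R t ω - (μ[fun ω' => max (R t ω' - X (t + 1) ω' - V (t + 1) ω') 0 | ℱ t]) ω) :
    (∀ t < T,
      (fun ω => (∑ s ∈ Finset.Icc 1 t, X s ω) + V t ω) ≤ᵐ[μ]
        μ[fun ω => (∑ s ∈ Finset.Icc 1 (t + 1), X s ω) + V (t + 1) ω | ℱ t]) ∧
    (∀ t ≤ T, V t ≤ᵐ[μ] μ[fun ω => ∑ s ∈ Finset.Icc (t + 1) T, X s ω | ℱ t]) :=
  stmt_4_general μ ℱ T X R V hXint hXadapted hRint hRadapted hVT hVrec
end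

section
/- If (R^S_t)_{t=0}^T defined by R^S_t := Σ_{s=1}^t X_s + R_t is a (Q, F)-supermartingale, then the process (C_t)_{t=0}^T defined by C_T = 0 and C_t = E^Q_t[(R_t - X_{t+1} - R_{t+1} + C_{t+1})_+] is a (Q, F)-supermartingale. In particular, C_0 = 0 then implies C_t = 0 almost surely for all t. -/
/-!
Since `x ≤ x₊`, monotonicity and linearity of conditional expectation give
`C_t ≥ R_t - E_t[X_{t+1} + R_{t+1}] + E_t[C_{t+1}]`, and the supermartingale property of `R^S`,
after pulling out the `F_t`-measurable partial sum `Σ_{s ≤ t} X_s`, says exactly that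
`E_t[X_{t+1} + R_{t+1}] ≤ R_t`. Hence `E_t[C_{t+1}] ≤ C_t`. A nonnegative supermartingale
started at `0` has expectation `0` at every time, so it vanishes almost surely.
-/

open MeasureTheory Finset

section CondExp

variable {Ω : Type*} {m m0 : MeasurableSpace Ω} {μ : Measure Ω}

lemma condExp_stronglyMeasurable_add {E : Type*} [NormedAddCommGroup E] [NormedSpace ℝ E]
    [CompleteSpace E] (hm : m ≤ m0) [SigmaFinite (μ.trim hm)] {s g : Ω → E}
    (hs : StronglyMeasurable[m] s) (hsi : Integrable s μ) (hg : Integrable g μ) :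
    μ[s + g | m] =ᵐ[μ] s + μ[g | m] := by
  have h := condExp_add hsi hg m
  rwa [condExp_of_stronglyMeasurable hm hs hsi] at h

lemma condExp_le_of_condExp_stronglyMeasurable_add_le (hm : m ≤ m0) [SigmaFinite (μ.trim hm)]
    {s g r : Ω → ℝ} (hs : StronglyMeasurable[m] s) (hsi : Integrable s μ) (hg : Integrable g μ)
    (h : μ[s + g | m] ≤ᵐ[μ] s + r) : μ[g | m] ≤ᵐ[μ] r := by
  filter_upwards [condExp_stronglyMeasurable_add hm hs hsi hg, h] with ω hadd hle
  simp only [Pi.add_apply] at hadd hle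
  linarith

lemma condExp_le_condExp_max_sub_add (hm : m ≤ m0) [SigmaFinite (μ.trim hm)] {r g c : Ω → ℝ}
    (hr : StronglyMeasurable[m] r) (hri : Integrable r μ) (hg : Integrable g μ)
    (hc : Integrable c μ) (hgr : μ[g | m] ≤ᵐ[μ] r) :
    μ[c | m] ≤ᵐ[μ] μ[fun ω => max (r ω - g ω + c ω) 0 | m] := by
  have hf : Integrable (r - g + c) μ := (hri.sub hg).add hc
  calc μ[c | m]
      ≤ᵐ[μ] μ[r - g + c | m] := by
        filter_upwards [condExp_add (hri.sub hg) hc m, condExp_sub hri hg m, hgr]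
          with ω hadd hsub hle
        rw [hadd, Pi.add_apply, hsub, Pi.sub_apply, condExp_of_stronglyMeasurable hm hr hri]
        linarith
    _ ≤ᵐ[μ] μ[fun ω => max (r ω - g ω + c ω) 0 | m] :=
        condExp_mono hf hf.pos_part (.of_forall fun ω => le_max_left _ _)

lemma ae_eq_zero_of_condExp_nonpos (hm : m ≤ m0) [SigmaFinite (μ.trim hm)] {f : Ω → ℝ}
    (hf0 : 0 ≤ᵐ[μ] f) (hfi : Integrable f μ) (h : μ[f | m] ≤ᵐ[μ] 0) : f =ᵐ[μ] 0 := by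
  refine (integral_eq_zero_iff_of_nonneg_ae hf0 hfi).1
    (le_antisymm ?_ (integral_nonneg_of_ae hf0))
  rw [← integral_condExp hm]
  exact integral_nonpos_of_ae h

lemma ae_eq_zero_of_nonneg_of_condExp_succ_le {ℱ : Filtration ℕ m0} [SigmaFiniteFiltration μ ℱ]
    {C : ℕ → Ω → ℝ} {T : ℕ} (hint : ∀ t ≤ T, Integrable (C t) μ)
    (hnonneg : ∀ t ≤ T, 0 ≤ᵐ[μ] C t) (hsuper : ∀ t < T, μ[C (t + 1) | ℱ t] ≤ᵐ[μ] C t)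
    (h0 : C 0 =ᵐ[μ] 0) : ∀ t ≤ T, C t =ᵐ[μ] 0 := by
  intro t ht
  induction t with
  | zero => exact h0
  | succ t ih =>
    exact ae_eq_zero_of_condExp_nonpos (ℱ.le t) (hnonneg _ ht) (hint _ ht)
      ((hsuper t ht).trans_eq (ih (by omega)))

end CondExp

theorem stmt_6_general {Ω : Type*} {m0 : MeasurableSpace Ω} (μ : Measure Ω) [IsProbabilityMeasure μ]
    (ℱ : Filtration ℕ m0) (T : ℕ) (X R C : ℕ → Ω → ℝ)
    (hXint : ∀ t, Integrable (X t) μ) (hXadapted : ∀ t, StronglyMeasurable[ℱ t] (X t))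
    (hRint : ∀ t, Integrable (R t) μ) (hRadapted : ∀ t, StronglyMeasurable[ℱ t] (R t))
    -- R^S is a (Q,F)-supermartingale:
    (hRSsuper : ∀ t < T,
      μ[fun ω => (∑ s ∈ Finset.Icc 1 (t + 1), X s ω) + R (t + 1) ω | ℱ t] ≤ᵐ[μ]
        fun ω => (∑ s ∈ Finset.Icc 1 t, X s ω) + R t ω)
    (hCT : C T = 0)
    (hCrec : ∀ t < T, C t =
      μ[fun ω => max (R t ω - X (t + 1) ω - R (t + 1) ω + C (t + 1) ω) 0 | ℱ t]) :
    (∀ t < T, μ[C (t + 1) | ℱ t] ≤ᵐ[μ] C t) ∧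
    ((C 0 =ᵐ[μ] 0) → ∀ t ≤ T, C t =ᵐ[μ] 0) := by
  have hCint : ∀ t ≤ T, Integrable (C t) μ := by
    intro t ht
    obtain h | rfl := ht.lt_or_eq
    · rw [hCrec t h]; exact integrable_condExp
    · rw [hCT]; exact integrable_zero _ _ _
  have hCnonneg : ∀ t ≤ T, 0 ≤ᵐ[μ] C t := by
    intro t ht
    obtain h | rfl := ht.lt_or_eq
    · rw [hCrec t h]; exact condExp_nonneg (.of_forall fun ω => le_max_right _ _)
    · rw [hCT]
  have hsuper : ∀ t < T, μ[C (t + 1) | ℱ t] ≤ᵐ[μ] C t := by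
    intro t ht
    have hstep : μ[X (t + 1) + R (t + 1) | ℱ t] ≤ᵐ[μ] R t := by
      refine condExp_le_of_condExp_stronglyMeasurable_add_le (ℱ.le t)
        (s := fun ω => ∑ s ∈ Icc 1 t, X s ω)
        (Finset.stronglyMeasurable_fun_sum _ fun s hs =>
          (hXadapted s).mono (ℱ.mono (mem_Icc.1 hs).2))
        (integrable_finsetSum _ fun s _ => hXint s) ((hXint _).add (hRint _)) ?_
      convert hRSsuper t ht using 3 with ω
      · rw [Pi.add_apply, Pi.add_apply, sum_Icc_succ_top (Nat.le_add_left 1 t)]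
        ring
      · rfl
    rw [hCrec t ht]
    convert condExp_le_condExp_max_sub_add (ℱ.le t) (hRadapted t) (hRint t)
      ((hXint _).add (hRint _)) (hCint _ ht) hstep using 5 with ω
    simp only [Pi.add_apply]
    ring
  exact ⟨hsuper, ae_eq_zero_of_nonneg_of_condExp_succ_le hCint hCnonneg hsuper⟩

/-- If `R^S_t := Σ_{s=1}^t X_s + R_t` is a `(Q,F)`-supermartingale, then the process
`(C_t)` defined by `C_T = 0` and `C_t = E^Q_t[(R_t - X_{t+1} - R_{t+1} + C_{t+1})_+]`
is a `(Q,F)`-supermartingale; in particular, if `C_0 = 0` a.s. then `C_t = 0` a.s.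
for all `t`. -/
theorem stmt_6 {Ω : Type*} {m0 : MeasurableSpace Ω} (μ : Measure Ω) [IsProbabilityMeasure μ]
    (ℱ : Filtration ℕ m0) (T : ℕ) (X R C : ℕ → Ω → ℝ)
    (hXint : ∀ t, Integrable (X t) μ) (hXadapted : ∀ t, StronglyMeasurable[ℱ t] (X t))
    (hRint : ∀ t, Integrable (R t) μ) (hRadapted : ∀ t, StronglyMeasurable[ℱ t] (R t))
    (hRT : R T = 0)
    -- R^S is a (Q,F)-supermartingale:
    (hRSsuper : ∀ t < T,
      μ[fun ω => (∑ s ∈ Finset.Icc 1 (t + 1), X s ω) + R (t + 1) ω | ℱ t] ≤ᵐ[μ]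
        fun ω => (∑ s ∈ Finset.Icc 1 t, X s ω) + R t ω)
    (hCT : C T = 0)
    (hCrec : ∀ t < T, C t =
      μ[fun ω => max (R t ω - X (t + 1) ω - R (t + 1) ω + C (t + 1) ω) 0 | ℱ t]) :
    (∀ t < T, μ[C (t + 1) | ℱ t] ≤ᵐ[μ] C t) ∧
    ((C 0 =ᵐ[μ] 0) → ∀ t ≤ T, C t =ᵐ[μ] 0) :=
  stmt_6_general μ ℱ T X R C hXint hXadapted hRint hRadapted hRSsuper hCT hCrec
end

section
/- Let ρ_t be a translation-invariant conditional risk measure and φ_t(Y) := ρ_t(-Y) - E^Q_t[(ρ_t(-Y) - Y)_+]. If the aggregate residual cash flow is F_0-measurable, i.e. Σ_{t=1}^T X_t = K with K F_0-measurable, then defining V_t := φ_t(X_{t+1} + V_{t+1}) backward with V_T = 0, one has V_0 = K and C_t := E^Q_t[(ρ_t(-X_{t+1}-V_{t+1}) - X_{t+1} - V_{t+1})_+] = 0 for all t ∈ {0,...,T-1}. -/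
/-!
Put `λ_t := K - ∑_{s=1}^t X_s`, which is `ℱ_t`-measurable and satisfies `λ_T = K - K = 0` and
`X_{t+1} + λ_{t+1} = λ_t`. Translation equivariance of `φ_t` gives `φ_t(λ_t) = λ_t`, so backward
induction yields `V_t = λ_t`; in particular `V_0 = K`. Cash invariance of `ρ_t` gives
`ρ_t(-λ_t) = λ_t`, so the integrand `(ρ_t(-X_{t+1} - V_{t+1}) - X_{t+1} - V_{t+1})_+` of `C_t`
vanishes almost surely.
-/

open MeasureTheory Finset

section Translation

variable {Ω : Type*} {m m0 : MeasurableSpace Ω} {Q : Measure Ω}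

lemma ae_eq_self_of_add_measurable {ψ : (Ω → ℝ) → Ω → ℝ}
    (hadd : ∀ Y lam : Ω → ℝ, StronglyMeasurable[m] lam →
      ψ (fun ω => Y ω + lam ω) =ᵐ[Q] fun ω => ψ Y ω + lam ω)
    (hzero : ψ 0 =ᵐ[Q] 0) {lam : Ω → ℝ} (hlam : StronglyMeasurable[m] lam) :
    ψ lam =ᵐ[Q] lam := by
  filter_upwards [hadd 0 lam hlam, hzero] with ω hω hω0
  simpa [hω0] using hω

lemma ae_eq_neg_of_sub_measurable {ρ : (Ω → ℝ) → Ω → ℝ}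
    (hadd : ∀ Y lam : Ω → ℝ, StronglyMeasurable[m] lam →
      ρ (fun ω => Y ω + lam ω) =ᵐ[Q] fun ω => ρ Y ω - lam ω)
    (hzero : ρ 0 =ᵐ[Q] 0) {lam : Ω → ℝ} (hlam : StronglyMeasurable[m] lam) :
    ρ lam =ᵐ[Q] -lam := by
  filter_upwards [hadd 0 lam hlam, hzero] with ω hω hω0
  simpa [hω0] using hω

lemma ae_congr_of_antitone {ρ : (Ω → ℝ) → Ω → ℝ}
    (hmono : ∀ Y Ytil : Ω → ℝ, Y ≤ᵐ[Q] Ytil → ρ Ytil ≤ᵐ[Q] ρ Y) {Y Ytil : Ω → ℝ}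
    (h : Y =ᵐ[Q] Ytil) : ρ Y =ᵐ[Q] ρ Ytil := by
  filter_upwards [hmono _ _ h.le, hmono _ _ h.symm.le] with ω h₁ h₂
  exact le_antisymm h₂ h₁

end Translation

section RemainingCashFlow

variable {Ω : Type*}

/-- `K - ∑_{s=1}^t X_s`, i.e. `∑_{s=t+1}^T X_s` once the total cash flow equals `K`. -/
def remainingCashFlow (K : ℝ) (X : ℕ → Ω → ℝ) (t : ℕ) (ω : Ω) : ℝ :=
  K - ∑ s ∈ Icc 1 t, X s ω

@[simp]
lemma remainingCashFlow_zero (K : ℝ) (X : ℕ → Ω → ℝ) : remainingCashFlow K X 0 = fun _ => K := by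
  ext
  simp [remainingCashFlow]

lemma add_remainingCashFlow_succ (K : ℝ) (X : ℕ → Ω → ℝ) (t : ℕ) (ω : Ω) :
    X (t + 1) ω + remainingCashFlow K X (t + 1) ω = remainingCashFlow K X t ω := by
  simp only [remainingCashFlow, sum_Icc_succ_top (Nat.le_add_left 1 t)]
  ring

lemma stronglyMeasurable_remainingCashFlow {m0 : MeasurableSpace Ω} {ℱ : Filtration ℕ m0}
    {X : ℕ → Ω → ℝ} (hX : ∀ t, StronglyMeasurable[ℱ t] (X t)) (K : ℝ) (t : ℕ) :
    StronglyMeasurable[ℱ t] (remainingCashFlow K X t) :=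
  stronglyMeasurable_const.sub <| Finset.stronglyMeasurable_fun_sum _ fun s hs =>
    (hX s).mono (ℱ.mono (mem_Icc.mp hs).2)

end RemainingCashFlow

lemma ae_eq_of_backward_recursion {Ω : Type*} {m0 : MeasurableSpace Ω} {Q : Measure Ω}
    {φ : ℕ → (Ω → ℝ) → Ω → ℝ} {X V lam : ℕ → Ω → ℝ} {T : ℕ}
    (hφcongr : ∀ t (Y Ytil : Ω → ℝ), Y =ᵐ[Q] Ytil → φ t Y =ᵐ[Q] φ t Ytil)
    (hφfix : ∀ t < T, φ t (lam t) =ᵐ[Q] lam t)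
    (hlam : ∀ t ω, X (t + 1) ω + lam (t + 1) ω = lam t ω)
    (hVT : V T =ᵐ[Q] lam T) (hVrec : ∀ t < T, V t = φ t (fun ω => X (t + 1) ω + V (t + 1) ω))
    {t : ℕ} (ht : t ≤ T) : V t =ᵐ[Q] lam t := by
  refine Nat.decreasingInduction (motive := fun t _ => V t =ᵐ[Q] lam t) (fun t ht ih => ?_) hVT ht
  have hY : (fun ω => X (t + 1) ω + V (t + 1) ω) =ᵐ[Q] lam t := by
    filter_upwards [ih] with ω hω
    rw [hω, hlam]
  rw [hVrec t ht]
  exact (hφcongr t _ _ hY).trans (hφfix t ht)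

theorem stmt_8_general {Ω : Type*} {m0 : MeasurableSpace Ω} (Q : Measure Ω)
    (ℱ : Filtration ℕ m0) (T : ℕ) (X : ℕ → Ω → ℝ)
    (hXadapted : ∀ t, StronglyMeasurable[ℱ t] (X t))
    (ρ φ : ℕ → (Ω → ℝ) → Ω → ℝ)
    -- ρ_t is translation invariant, monotone and normalized:
    (hρadd : ∀ t (Y lam : Ω → ℝ), StronglyMeasurable[ℱ t] lam →
      ρ t (fun ω => Y ω + lam ω) =ᵐ[Q] fun ω => ρ t Y ω - lam ω)
    (hρmono : ∀ t (Y Ytil : Ω → ℝ), Y ≤ᵐ[Q] Ytil → ρ t Ytil ≤ᵐ[Q] ρ t Y)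
    (hρzero : ∀ t, ρ t 0 =ᵐ[Q] 0)
    -- φ_t is translation equivariant, normalized, and respects a.e. equality:
    (hφadd : ∀ t (Y lam : Ω → ℝ), StronglyMeasurable[ℱ t] lam →
      φ t (fun ω => Y ω + lam ω) =ᵐ[Q] fun ω => φ t Y ω + lam ω)
    (hφzero : ∀ t, φ t 0 =ᵐ[Q] 0)
    (hφcongr : ∀ t (Y Ytil : Ω → ℝ), Y =ᵐ[Q] Ytil → φ t Y =ᵐ[Q] φ t Ytil)
    (V : ℕ → Ω → ℝ) (hVT : V T = 0)
    (hVrec : ∀ t < T, V t = φ t (fun ω => X (t + 1) ω + V (t + 1) ω))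
    (K : ℝ) (hK : ∀ᵐ ω ∂Q, ∑ t ∈ Finset.Icc 1 T, X t ω = K) :
    (V 0 =ᵐ[Q] fun _ => K) ∧
    (∀ t < T,
      Q[fun ω => max (ρ t (fun x => -(X (t + 1) x + V (t + 1) x)) ω
          - X (t + 1) ω - V (t + 1) ω) 0 | ℱ t] =ᵐ[Q] 0) := by
  set lam := remainingCashFlow K X
  have hlamSM := stronglyMeasurable_remainingCashFlow hXadapted K
  have hVT' : V T =ᵐ[Q] lam T := by
    filter_upwards [hK] with ω hω
    simp [hVT, lam, remainingCashFlow, hω]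
  have hV : ∀ t ≤ T, V t =ᵐ[Q] lam t := fun t ht =>
    ae_eq_of_backward_recursion hφcongr
      (fun t _ => ae_eq_self_of_add_measurable (hφadd t) (hφzero t) (hlamSM t))
      (add_remainingCashFlow_succ K X) hVT' hVrec ht
  refine ⟨remainingCashFlow_zero K X ▸ hV 0 T.zero_le, fun t ht => ?_⟩
  have hY : (fun ω => X (t + 1) ω + V (t + 1) ω) =ᵐ[Q] lam t := by
    filter_upwards [hV (t + 1) ht] with ω hω
    rw [hω, add_remainingCashFlow_succ]
  have hρY : ρ t (fun x => -(X (t + 1) x + V (t + 1) x)) =ᵐ[Q] lam t := by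
    filter_upwards [ae_congr_of_antitone (hρmono t) (hY.fun_comp Neg.neg),
      ae_eq_neg_of_sub_measurable (hρadd t) (hρzero t) (hlamSM t).neg] with ω h₁ h₂
    exact h₁.trans (h₂.trans (neg_neg _))
  have hintegrand : (fun ω => max (ρ t (fun x => -(X (t + 1) x + V (t + 1) x)) ω
      - X (t + 1) ω - V (t + 1) ω) 0) =ᵐ[Q] 0 := by
    filter_upwards [hρY, hY] with ω h₁ h₂
    rw [h₁, sub_sub, h₂, sub_self, max_self]
    rfl
  exact (condExp_congr_ae hintegrand).trans (by rw [condExp_zero])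

/-- If the aggregate residual cash flow is deterministic, `Σ_{t=1}^T X_t = K`, then the
backward recursion `V_T = 0`, `V_t = φ_t(X_{t+1} + V_{t+1})` with
`φ_t(Y) = ρ_t(-Y) - E^Q_t[(ρ_t(-Y) - Y)_+]` yields `V_0 = K`, and
`C_t := E^Q_t[(ρ_t(-X_{t+1}-V_{t+1}) - X_{t+1} - V_{t+1})_+] = 0` for all `t < T`. -/
theorem stmt_8 {Ω : Type*} {m0 : MeasurableSpace Ω} (Q : Measure Ω) [IsProbabilityMeasure Q]
    (ℱ : Filtration ℕ m0) (T : ℕ) (X : ℕ → Ω → ℝ)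
    (hXint : ∀ t, Integrable (X t) Q) (hXadapted : ∀ t, StronglyMeasurable[ℱ t] (X t))
    (ρ φ : ℕ → (Ω → ℝ) → Ω → ℝ)
    -- ρ_t is translation invariant, monotone and normalized:
    (hρadd : ∀ t (Y lam : Ω → ℝ), StronglyMeasurable[ℱ t] lam →
      ρ t (fun ω => Y ω + lam ω) =ᵐ[Q] fun ω => ρ t Y ω - lam ω)
    (hρmono : ∀ t (Y Ytil : Ω → ℝ), Y ≤ᵐ[Q] Ytil → ρ t Ytil ≤ᵐ[Q] ρ t Y)
    (hρzero : ∀ t, ρ t 0 =ᵐ[Q] 0)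
    -- φ_t is given by ρ_t and the Q-conditional expectation:
    (hφdef : ∀ t (Y : Ω → ℝ), φ t Y = fun ω =>
      ρ t (fun x => -Y x) ω -
        (Q[fun x => max (ρ t (fun y => -Y y) x - Y x) 0 | ℱ t]) ω)
    -- φ_t is translation equivariant, normalized, and respects a.e. equality:
    (hφadd : ∀ t (Y lam : Ω → ℝ), StronglyMeasurable[ℱ t] lam →
      φ t (fun ω => Y ω + lam ω) =ᵐ[Q] fun ω => φ t Y ω + lam ω)
    (hφzero : ∀ t, φ t 0 =ᵐ[Q] 0)
    (hφcongr : ∀ t (Y Ytil : Ω → ℝ), Y =ᵐ[Q] Ytil → φ t Y =ᵐ[Q] φ t Ytil)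
    (V : ℕ → Ω → ℝ) (hVT : V T = 0)
    (hVrec : ∀ t < T, V t = φ t (fun ω => X (t + 1) ω + V (t + 1) ω))
    (K : ℝ) (hK : ∀ᵐ ω ∂Q, ∑ t ∈ Finset.Icc 1 T, X t ω = K) :
    (V 0 =ᵐ[Q] fun _ => K) ∧
    (∀ t < T,
      Q[fun ω => max (ρ t (fun x => -(X (t + 1) x + V (t + 1) x)) ω
          - X (t + 1) ω - V (t + 1) ω) 0 | ℱ t] =ᵐ[Q] 0) :=
  stmt_8_general Q ℱ T X hXadapted ρ φ hρadd hρmono hρzero hφadd hφzero hφcongr V hVT hVrec K hK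
end

section
/- In the Gaussian model, with X_s := g_s^T G_s, one has E^P_t[ E^Q_{t+1}[ Σ_{s=t+1}^T X_s ] ] = E^Q_t[ Σ_{s=t+1}^T X_s ] - Σ_{s=t+1}^T g_s^T B_{s,t+1} λ_{t+1}. -/
open MeasureTheory ProbabilityTheory Finset Matrix

/-- The Gaussian process `G_t = A_t + Σ_{s=1}^t B_{t,s} ε_s`. -/
noncomputable def GProc {Ω : Type*} {n : ℕ} (A : ℕ → Fin n → ℝ)
    (B : ℕ → ℕ → Matrix (Fin n) (Fin n) ℝ) (ε : ℕ → Ω → Fin n → ℝ)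
    (t : ℕ) (ω : Ω) : Fin n → ℝ :=
  fun i => A t i + ∑ s ∈ Finset.Icc 1 t, ((B t s).mulVec (ε s ω)) i

/-- The Girsanov density process `D_t = exp(Σ_{s=1}^t (λ_s^T ε_s - ½ λ_s^T λ_s))`. -/
noncomputable def DDens {Ω : Type*} {n : ℕ} (l : ℕ → Fin n → ℝ)
    (ε : ℕ → Ω → Fin n → ℝ) (t : ℕ) (ω : Ω) : ℝ :=
  Real.exp (∑ s ∈ Finset.Icc 1 t, ((l s) ⬝ᵥ (ε s ω) - (1 / 2) * ((l s) ⬝ᵥ (l s))))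

/-- The filtration generated by `ε_1, ..., ε_t`. -/
def gaussFilt {Ω : Type*} {n : ℕ} (ε : ℕ → Ω → Fin n → ℝ) (t : ℕ) :
    MeasurableSpace Ω :=
  ⨆ s ∈ Finset.Icc 1 t, MeasurableSpace.comap (ε s) inferInstance

/-!
Write `Z := Σ_{s=t+1}^T g_sᵀ G_s` as an affine function `κ + Σ_{u ≤ T} C_uᵀ ε_u` of the noise.
Since `ε_{r+1}` is independent of `G_r` and, for a standard Gaussian vector `ε`,
`E[e^{aᵀε - |a|²/2}] = 1` and `E[e^{aᵀε - |a|²/2} cᵀε] = cᵀa`, conditioning `D_T Z` on `G_r` one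
step at a time shows that `D_r⁻¹ E^P_r[D_T Z]` is `Z` with every future `ε_u` replaced by `λ_u`
(Girsanov). So `E^Q_{t+1}[Z]` and `E^Q_t[Z]` differ only in the `ε_{t+1}`-term: the first keeps
`C_{t+1}ᵀ ε_{t+1}`, whose `P`-mean given `G_t` is `0`, the second has `C_{t+1}ᵀ λ_{t+1}`.
-/

open Real
open scoped NNReal

namespace ProbabilityTheory

section GaussianReal

variable {m : ℝ} {v : ℝ≥0}

lemma integral_exp_mul_gaussianReal (t : ℝ) :
    ∫ x, exp (t * x) ∂gaussianReal m v = exp (m * t + v * t ^ 2 / 2) :=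
  congrFun mgf_fun_id_gaussianReal t

lemma integrable_mul_exp_mul_gaussianReal (t : ℝ) :
    Integrable (fun x ↦ x * exp (t * x)) (gaussianReal m v) := by
  simpa using integrable_pow_mul_exp_of_mem_interior_integrableExpSet
    (X := fun x ↦ x) (μ := gaussianReal m v) (by simp) 1

lemma integral_mul_exp_mul_gaussianReal (t : ℝ) :
    ∫ x, x * exp (t * x) ∂gaussianReal m v = (m + v * t) * exp (m * t + v * t ^ 2 / 2) := by
  have hmgf := hasDerivAt_mgf (X := fun x ↦ x) (μ := gaussianReal m v) (t := t) (by simp)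
  rw [mgf_fun_id_gaussianReal] at hmgf
  have hexp : HasDerivAt (fun t ↦ exp (m * t + v * t ^ 2 / 2))
      ((m + v * t) * exp (m * t + v * t ^ 2 / 2)) t := by
    convert (((hasDerivAt_id t).const_mul m).add
      (((hasDerivAt_pow 2 t).const_mul (v : ℝ)).div_const 2)).exp using 1
    · rfl
    · simp only [Pi.add_apply, id]
      ring
  exact hmgf.unique hexp

end GaussianReal

section StdGaussianPi

noncomputable abbrev stdGaussianPi (ι : Type*) [Fintype ι] : Measure (ι → ℝ) :=
  Measure.pi fun _ : ι ↦ gaussianReal 0 1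

variable {ι : Type*} [Fintype ι]

lemma prod_exp_mul_eq_exp_dotProduct (a x : ι → ℝ) :
    ∏ i, exp (a i * x i) = exp (a ⬝ᵥ x) := by
  rw [← exp_sum]
  rfl

lemma integrable_exp_dotProduct_stdGaussianPi (a : ι → ℝ) :
    Integrable (fun x ↦ exp (a ⬝ᵥ x)) (stdGaussianPi ι) := by
  simp_rw [← prod_exp_mul_eq_exp_dotProduct]
  exact Integrable.fintype_prod (f := fun i y ↦ exp (a i * y))
    fun i ↦ integrable_exp_mul_gaussianReal (a i)

lemma integral_exp_dotProduct_stdGaussianPi (a : ι → ℝ) :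
    ∫ x, exp (a ⬝ᵥ x) ∂stdGaussianPi ι = exp (a ⬝ᵥ a / 2) := by
  simp_rw [← prod_exp_mul_eq_exp_dotProduct]
  rw [integral_fintype_prod_eq_prod (fun i y ↦ exp (a i * y))]
  simp_rw [integral_exp_mul_gaussianReal, ← exp_sum]
  simp [dotProduct, sum_div, sq]

lemma exp_dotProduct_mul_apply_eq_prod [DecidableEq ι] (a x : ι → ℝ) (j : ι) :
    exp (a ⬝ᵥ x) * x j = ∏ i, (if i = j then x i else 1) * exp (a i * x i) := by
  rw [prod_mul_distrib, prod_ite_eq', if_pos (mem_univ j), prod_exp_mul_eq_exp_dotProduct,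
    mul_comm]

lemma integrable_exp_dotProduct_mul_apply_stdGaussianPi (a : ι → ℝ) (j : ι) :
    Integrable (fun x ↦ exp (a ⬝ᵥ x) * x j) (stdGaussianPi ι) := by
  classical
  simp_rw [exp_dotProduct_mul_apply_eq_prod a _ j]
  refine Integrable.fintype_prod (f := fun i y ↦ (if i = j then y else 1) * exp (a i * y))
    fun i ↦ ?_
  split_ifs
  · exact integrable_mul_exp_mul_gaussianReal (a i)
  · simpa using integrable_exp_mul_gaussianReal (a i)

lemma integral_exp_dotProduct_mul_apply_stdGaussianPi (a : ι → ℝ) (j : ι) :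
    ∫ x, exp (a ⬝ᵥ x) * x j ∂stdGaussianPi ι = a j * exp (a ⬝ᵥ a / 2) := by
  classical
  have hcoord : ∀ i, ∫ y, (if i = j then y else 1) * exp (a i * y) ∂gaussianReal 0 1
      = (if i = j then a i else 1) * exp (a i ^ 2 / 2) := by
    intro i
    split_ifs
    · simp [integral_mul_exp_mul_gaussianReal]
    · simp [integral_exp_mul_gaussianReal]
  simp_rw [exp_dotProduct_mul_apply_eq_prod a _ j]
  rw [integral_fintype_prod_eq_prod (fun i y ↦ (if i = j then y else 1) * exp (a i * y))]
  simp_rw [hcoord]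
  rw [prod_mul_distrib, prod_ite_eq', if_pos (mem_univ j), ← exp_sum]
  simp [dotProduct, sum_div, sq]

lemma exp_dotProduct_mul_dotProduct_eq_sum (a c x : ι → ℝ) :
    exp (a ⬝ᵥ x) * (c ⬝ᵥ x) = ∑ j, c j * (exp (a ⬝ᵥ x) * x j) := by
  rw [show c ⬝ᵥ x = ∑ j, c j * x j from rfl, mul_sum]
  exact sum_congr rfl fun j _ ↦ by ring

lemma integrable_exp_dotProduct_mul_dotProduct_stdGaussianPi (a c : ι → ℝ) :
    Integrable (fun x ↦ exp (a ⬝ᵥ x) * (c ⬝ᵥ x)) (stdGaussianPi ι) := by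
  simp_rw [exp_dotProduct_mul_dotProduct_eq_sum a c]
  exact integrable_finsetSum _ fun j _ ↦
    (integrable_exp_dotProduct_mul_apply_stdGaussianPi a j).const_mul (c j)

lemma integral_exp_dotProduct_mul_dotProduct_stdGaussianPi (a c : ι → ℝ) :
    ∫ x, exp (a ⬝ᵥ x) * (c ⬝ᵥ x) ∂stdGaussianPi ι = (c ⬝ᵥ a) * exp (a ⬝ᵥ a / 2) := by
  simp_rw [exp_dotProduct_mul_dotProduct_eq_sum a c]
  rw [integral_finsetSum _ fun j _ ↦
    (integrable_exp_dotProduct_mul_apply_stdGaussianPi a j).const_mul (c j)]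
  simp_rw [integral_const_mul, integral_exp_dotProduct_mul_apply_stdGaussianPi]
  rw [show c ⬝ᵥ a = ∑ j, c j * a j from rfl, sum_mul]
  exact sum_congr rfl fun j _ ↦ by ring

/-- The density of `N(a, I)` with respect to `N(0, I)`. -/
noncomputable def girsanovFactor (a x : ι → ℝ) : ℝ :=
  exp (a ⬝ᵥ x - 1 / 2 * (a ⬝ᵥ a))

lemma measurable_girsanovFactor (a : ι → ℝ) : Measurable (girsanovFactor a) := by
  unfold girsanovFactor
  fun_prop

lemma measurable_girsanovFactor_mul_dotProduct (a c : ι → ℝ) :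
    Measurable fun x ↦ girsanovFactor a x * (c ⬝ᵥ x) :=
  (measurable_girsanovFactor a).mul (by fun_prop)

lemma girsanovFactor_eq (a x : ι → ℝ) :
    girsanovFactor a x = exp (a ⬝ᵥ x) / exp (a ⬝ᵥ a / 2) := by
  rw [girsanovFactor, ← exp_sub]
  ring_nf

lemma integrable_girsanovFactor (a : ι → ℝ) :
    Integrable (girsanovFactor a) (stdGaussianPi ι) := by
  simp_rw [funext (girsanovFactor_eq a)]
  exact (integrable_exp_dotProduct_stdGaussianPi a).div_const _

lemma integral_girsanovFactor (a : ι → ℝ) :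
    ∫ x, girsanovFactor a x ∂stdGaussianPi ι = 1 := by
  simp_rw [girsanovFactor_eq, integral_div, integral_exp_dotProduct_stdGaussianPi]
  exact div_self (exp_pos _).ne'

lemma integrable_girsanovFactor_mul_dotProduct (a c : ι → ℝ) :
    Integrable (fun x ↦ girsanovFactor a x * (c ⬝ᵥ x)) (stdGaussianPi ι) := by
  simp_rw [girsanovFactor_eq, div_mul_eq_mul_div]
  exact (integrable_exp_dotProduct_mul_dotProduct_stdGaussianPi a c).div_const _

lemma integral_girsanovFactor_mul_dotProduct (a c : ι → ℝ) :
    ∫ x, girsanovFactor a x * (c ⬝ᵥ x) ∂stdGaussianPi ι = c ⬝ᵥ a := by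
  simp_rw [girsanovFactor_eq, div_mul_eq_mul_div, integral_div,
    integral_exp_dotProduct_mul_dotProduct_stdGaussianPi]
  exact mul_div_cancel_right₀ _ (exp_pos _).ne'

end StdGaussianPi

section Independence

variable {Ω : Type*} {m m0 : MeasurableSpace Ω} {μ : Measure Ω}

lemma map_eq_stdGaussianPi {ι : Type*} [Fintype ι] {X : Ω → ι → ℝ}
    (hX : Measurable X) (hind : iIndepFun (fun i ω ↦ X ω i) μ)
    (hgauss : ∀ i, μ.map (fun ω ↦ X ω i) = gaussianReal 0 1) :
    μ.map X = stdGaussianPi ι := by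
  have h := hind.map_fun_eq_pi_map fun i ↦ ((measurable_pi_apply i).comp hX).aemeasurable
  simp only [Function.comp_def, hgauss] at h
  exact h

variable {E : Type*} [MeasurableSpace E] {X : Ω → ℝ} {Y : Ω → E}
  {F : E → ℝ}

lemma Indep.integrable_mul_comp (hX : StronglyMeasurable[m] X) (hXi : Integrable X μ)
    (hF : Measurable F) (hFi : Integrable (fun ω ↦ F (Y ω)) μ)
    (hind : Indep (MeasurableSpace.comap Y inferInstance) m μ) :
    Integrable (fun ω ↦ X ω * F (Y ω)) μ := by
  have hXF : IndepFun X (fun ω ↦ F (Y ω)) μ := by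
    rw [IndepFun_iff_Indep]
    refine indep_of_indep_of_le_left (indep_of_indep_of_le_right hind.symm ?_)
      hX.measurable.comap_le
    exact (MeasurableSpace.comap_comp ..).symm.le.trans (MeasurableSpace.comap_mono hF.comap_le)
  exact hXF.integrable_mul hXi hFi

lemma condExp_mul_comp_of_indep [IsFiniteMeasure μ] (hm : m ≤ m0) (hX : StronglyMeasurable[m] X)
    (hXi : Integrable X μ) (hY : Measurable Y) (hF : Measurable F)
    (hFi : Integrable (fun ω ↦ F (Y ω)) μ)
    (hind : Indep (MeasurableSpace.comap Y inferInstance) m μ) :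
    μ[fun ω ↦ X ω * F (Y ω) | m] =ᵐ[μ] fun ω ↦ X ω * ∫ y, F y ∂μ.map Y := by
  have hFY : μ[fun ω ↦ F (Y ω) | m] =ᵐ[μ] fun _ ↦ ∫ ω, F (Y ω) ∂μ :=
    condExp_indep_eq hY.comap_le hm (hF.comp (comap_measurable Y)).stronglyMeasurable hind
  filter_upwards [condExp_mul_of_stronglyMeasurable_left (g := fun ω ↦ F (Y ω)) hX
    (hind.integrable_mul_comp hX hXi hF hFi) hFi, hFY] with ω hω hFω
  refine hω.trans ?_
  rw [Pi.mul_apply, hFω, integral_map hY.aemeasurable hF.aestronglyMeasurable]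

end Independence

end ProbabilityTheory

section GaussianModel

variable {Ω : Type*} {m0 : MeasurableSpace Ω} {μ : Measure Ω} {n : ℕ} {ε : ℕ → Ω → Fin n → ℝ}

lemma gaussFilt_le (hmeas : ∀ t, Measurable (ε t)) (r : ℕ) : gaussFilt ε r ≤ m0 :=
  iSup₂_le fun s _ ↦ (hmeas s).comap_le

lemma gaussFilt_mono : Monotone (gaussFilt ε) := fun _ _ hrr' ↦
  biSup_mono fun _ hs ↦ Icc_subset_Icc_right hrr' hs

lemma measurable_gaussFilt {r u : ℕ} (hu : u ∈ Icc 1 r) : Measurable[gaussFilt ε r] (ε u) :=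
  Measurable.of_comap_le (le_iSup₂ (f := fun s (_ : s ∈ Icc 1 r) ↦
    MeasurableSpace.comap (ε s) inferInstance) u hu)

lemma indep_gaussFilt (hmeas : ∀ t, Measurable (ε t)) (hindep : iIndepFun ε μ) {r u : ℕ}
    (hru : r < u) : Indep (MeasurableSpace.comap (ε u) inferInstance) (gaussFilt ε r) μ := by
  have hdisj : Disjoint ({u} : Set ℕ) (Icc 1 r : Set ℕ) := by
    simp only [Set.disjoint_singleton_left, coe_Icc, Set.mem_Icc, not_and, not_le]
    omega
  have h := indep_iSup_of_disjoint (fun s ↦ (hmeas s).comap_le)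
    ((iIndepFun_iff_iIndep _ _ _).1 hindep) hdisj
  rwa [_root_.iSup_singleton] at h

lemma DDens_succ (l : ℕ → Fin n → ℝ) (r : ℕ) (ω : Ω) :
    DDens l ε (r + 1) ω = DDens l ε r ω * girsanovFactor (l (r + 1)) (ε (r + 1) ω) := by
  rw [DDens, DDens, sum_Icc_succ_top (by omega), exp_add, girsanovFactor]

lemma DDens_pos (l : ℕ → Fin n → ℝ) (r : ℕ) (ω : Ω) : 0 < DDens l ε r ω :=
  exp_pos _

lemma DDens_zero_left (r : ℕ) (ω : Ω) : DDens 0 ε r ω = 1 := by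
  simp [DDens]

lemma stronglyMeasurable_DDens (l : ℕ → Fin n → ℝ) (r : ℕ) :
    StronglyMeasurable[gaussFilt ε r] (DDens l ε r) :=
  (measurable_exp.comp <| Finset.measurable_sum _ fun u hu ↦
    ((by fun_prop : Measurable fun x ↦ l u ⬝ᵥ x - 1 / 2 * (l u ⬝ᵥ l u)).comp
      (measurable_gaussFilt hu))).stronglyMeasurable

noncomputable def noiseSum (C : ℕ → Fin n → ℝ) (ε : ℕ → Ω → Fin n → ℝ) (r : ℕ) (ω : Ω) : ℝ :=
  ∑ u ∈ Icc 1 r, C u ⬝ᵥ ε u ω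

lemma noiseSum_succ (C : ℕ → Fin n → ℝ) (r : ℕ) (ω : Ω) :
    noiseSum C ε (r + 1) ω = noiseSum C ε r ω + C (r + 1) ⬝ᵥ ε (r + 1) ω :=
  sum_Icc_succ_top (by omega) _

lemma stronglyMeasurable_noiseSum (C : ℕ → Fin n → ℝ) (r : ℕ) :
    StronglyMeasurable[gaussFilt ε r] (noiseSum C ε r) :=
  (Finset.measurable_sum _ fun u hu ↦
    ((by fun_prop : Measurable fun x ↦ C u ⬝ᵥ x).comp (measurable_gaussFilt hu))).stronglyMeasurable

lemma DDens_succ_mul_add_noiseSum_succ (l C : ℕ → Fin n → ℝ) (r : ℕ) (κ : ℝ) (ω : Ω) :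
    DDens l ε (r + 1) ω * (κ + noiseSum C ε (r + 1) ω)
      = DDens l ε r ω * (κ + noiseSum C ε r ω) * girsanovFactor (l (r + 1)) (ε (r + 1) ω)
        + DDens l ε r ω *
          (girsanovFactor (l (r + 1)) (ε (r + 1) ω) * (C (r + 1) ⬝ᵥ ε (r + 1) ω)) := by
  rw [DDens_succ, noiseSum_succ]
  ring

lemma stronglyMeasurable_DDens_mul_add_noiseSum (l C : ℕ → Fin n → ℝ) (r : ℕ) (κ : ℝ) :
    StronglyMeasurable[gaussFilt ε r] fun ω ↦ DDens l ε r ω * (κ + noiseSum C ε r ω) :=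
  (stronglyMeasurable_DDens l r).mul ((stronglyMeasurable_noiseSum C r).const_add κ)

lemma integrable_girsanovFactor_comp (hmeas : ∀ t, Measurable (ε t))
    (hlaw : ∀ t, μ.map (ε t) = stdGaussianPi (Fin n)) (a : Fin n → ℝ) (u : ℕ) :
    Integrable (fun ω ↦ girsanovFactor a (ε u ω)) μ :=
  (hlaw u ▸ integrable_girsanovFactor a).comp_measurable (hmeas u)

lemma integrable_girsanovFactor_mul_dotProduct_comp (hmeas : ∀ t, Measurable (ε t))
    (hlaw : ∀ t, μ.map (ε t) = stdGaussianPi (Fin n)) (a c : Fin n → ℝ) (u : ℕ) :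
    Integrable (fun ω ↦ girsanovFactor a (ε u ω) * (c ⬝ᵥ ε u ω)) μ :=
  (hlaw u ▸ integrable_girsanovFactor_mul_dotProduct a c).comp_measurable (hmeas u)

variable [IsProbabilityMeasure μ]

lemma integrable_DDens_mul_add_noiseSum (hmeas : ∀ t, Measurable (ε t)) (hindep : iIndepFun ε μ)
    (hlaw : ∀ t, μ.map (ε t) = stdGaussianPi (Fin n)) (l C : ℕ → Fin n → ℝ) (r : ℕ) (κ : ℝ) :
    Integrable (fun ω ↦ DDens l ε r ω * (κ + noiseSum C ε r ω)) μ := by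
  induction r generalizing κ C with
  | zero => simp [DDens, noiseSum]
  | succ r ih =>
    have hD : Integrable (DDens l ε r) μ := by simpa [noiseSum] using ih 0 1
    have hind := indep_gaussFilt hmeas hindep r.lt_succ_self
    simp_rw [DDens_succ_mul_add_noiseSum_succ]
    exact (Indep.integrable_mul_comp (stronglyMeasurable_DDens_mul_add_noiseSum l C r κ)
        (ih C κ) (measurable_girsanovFactor _) (integrable_girsanovFactor_comp hmeas hlaw _ _)
        hind).add
      (Indep.integrable_mul_comp (stronglyMeasurable_DDens l r) hD
        (measurable_girsanovFactor_mul_dotProduct _ _)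
        (integrable_girsanovFactor_mul_dotProduct_comp hmeas hlaw _ _ _) hind)

lemma condExp_DDens_succ_mul_add_noiseSum_succ (hmeas : ∀ t, Measurable (ε t))
    (hindep : iIndepFun ε μ) (hlaw : ∀ t, μ.map (ε t) = stdGaussianPi (Fin n))
    (l C : ℕ → Fin n → ℝ) (r : ℕ) (κ : ℝ) :
    μ[fun ω ↦ DDens l ε (r + 1) ω * (κ + noiseSum C ε (r + 1) ω) | gaussFilt ε r]
      =ᵐ[μ] fun ω ↦ DDens l ε r ω * (κ + C (r + 1) ⬝ᵥ l (r + 1) + noiseSum C ε r ω) := by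
  have hle := gaussFilt_le hmeas r
  have hind := indep_gaussFilt hmeas hindep r.lt_succ_self
  have hD : Integrable (DDens l ε r) μ := by
    simpa [noiseSum] using integrable_DDens_mul_add_noiseSum hmeas hindep hlaw l 0 r 1
  have hDZ := integrable_DDens_mul_add_noiseSum hmeas hindep hlaw l C r κ
  have hDZm := stronglyMeasurable_DDens_mul_add_noiseSum (ε := ε) l C r κ
  have hF := integrable_girsanovFactor_comp hmeas hlaw (l (r + 1)) (r + 1)
  have hFc :=
    integrable_girsanovFactor_mul_dotProduct_comp hmeas hlaw (l (r + 1)) (C (r + 1)) (r + 1)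
  have h1 := condExp_mul_comp_of_indep hle hDZm hDZ (hmeas (r + 1)) (measurable_girsanovFactor _)
    hF hind
  have h2 := condExp_mul_comp_of_indep hle (stronglyMeasurable_DDens l r) hD (hmeas (r + 1))
    (measurable_girsanovFactor_mul_dotProduct _ _) hFc hind
  rw [hlaw, integral_girsanovFactor] at h1
  rw [hlaw, integral_girsanovFactor_mul_dotProduct] at h2
  simp_rw [DDens_succ_mul_add_noiseSum_succ]
  filter_upwards [condExp_add (hind.integrable_mul_comp hDZm hDZ (measurable_girsanovFactor _) hF)
    (hind.integrable_mul_comp (stronglyMeasurable_DDens l r) hD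
      (measurable_girsanovFactor_mul_dotProduct _ _) hFc) (gaussFilt ε r), h1, h2]
    with ω hadd h1ω h2ω
  refine hadd.trans ?_
  rw [Pi.add_apply, h1ω, h2ω]
  ring

lemma condExp_DDens_mul_add_noiseSum (hmeas : ∀ t, Measurable (ε t))
    (hindep : iIndepFun ε μ) (hlaw : ∀ t, μ.map (ε t) = stdGaussianPi (Fin n))
    (l C : ℕ → Fin n → ℝ) {r m : ℕ} (hrm : r ≤ m) (κ : ℝ) :
    μ[fun ω ↦ DDens l ε m ω * (κ + noiseSum C ε m ω) | gaussFilt ε r]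
      =ᵐ[μ] fun ω ↦ DDens l ε r ω * (κ + ∑ u ∈ Ioc r m, C u ⬝ᵥ l u + noiseSum C ε r ω) := by
  induction m, hrm using Nat.le_induction generalizing κ with
  | base =>
    rw [condExp_of_stronglyMeasurable (gaussFilt_le hmeas r)
      (stronglyMeasurable_DDens_mul_add_noiseSum l C r κ)
      (integrable_DDens_mul_add_noiseSum hmeas hindep hlaw l C r κ)]
    simp
  | succ m hrm ih =>
    calc μ[fun ω ↦ DDens l ε (m + 1) ω * (κ + noiseSum C ε (m + 1) ω) | gaussFilt ε r]
        =ᵐ[μ] μ[μ[fun ω ↦ DDens l ε (m + 1) ω * (κ + noiseSum C ε (m + 1) ω) | gaussFilt ε m]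
            | gaussFilt ε r] :=
          (condExp_condExp_of_le (gaussFilt_mono hrm) (gaussFilt_le hmeas m)).symm
      _ =ᵐ[μ] μ[fun ω ↦ DDens l ε m ω * (κ + C (m + 1) ⬝ᵥ l (m + 1) + noiseSum C ε m ω)
            | gaussFilt ε r] :=
          condExp_congr_ae (condExp_DDens_succ_mul_add_noiseSum_succ hmeas hindep hlaw l C m κ)
      _ =ᵐ[μ] _ := ih _
      _ = _ := by
          ext ω
          rw [sum_Ioc_succ_top hrm]
          ring

/-- The coefficient of `ε_u` in `Σ_{s=t+1}^T g_sᵀ G_s`. -/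
noncomputable def noiseLoading (B : ℕ → ℕ → Matrix (Fin n) (Fin n) ℝ) (g : ℕ → Fin n → ℝ)
    (t T u : ℕ) : Fin n → ℝ :=
  ∑ s ∈ Icc (max (t + 1) u) T, g s ᵥ* B s u

lemma sum_dotProduct_GProc (A : ℕ → Fin n → ℝ) (B : ℕ → ℕ → Matrix (Fin n) (Fin n) ℝ)
    (g : ℕ → Fin n → ℝ) (t T : ℕ) (ω : Ω) :
    ∑ s ∈ Icc (t + 1) T, g s ⬝ᵥ GProc A B ε s ω
      = ∑ s ∈ Icc (t + 1) T, g s ⬝ᵥ A s + noiseSum (noiseLoading B g t T) ε T ω := by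
  have hG : ∀ s, GProc A B ε s ω = A s + ∑ u ∈ Icc 1 s, B s u *ᵥ ε u ω := fun s ↦ by
    ext i
    simp [GProc, Finset.sum_apply]
  simp_rw [hG, dotProduct_add, dotProduct_sum, sum_add_distrib, dotProduct_mulVec]
  rw [sum_comm' (t' := Icc 1 T) (s' := fun u ↦ Icc (max (t + 1) u) T) fun s u ↦ by
    simp only [mem_Icc, max_le_iff]
    omega]
  simp_rw [← sum_dotProduct]
  rfl

lemma noiseLoading_succ_dotProduct (B : ℕ → ℕ → Matrix (Fin n) (Fin n) ℝ)
    (g : ℕ → Fin n → ℝ) (t T : ℕ) (v : Fin n → ℝ) :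
    noiseLoading B g t T (t + 1) ⬝ᵥ v = ∑ s ∈ Icc (t + 1) T, g s ⬝ᵥ B s (t + 1) *ᵥ v := by
  simp_rw [noiseLoading, max_self, sum_dotProduct, dotProduct_mulVec]

end GaussianModel

/-- `E^Q_r[Z]` is encoded as `D_r⁻¹ E^P_r[D_T Z]`. -/
theorem stmt_15_general {Ω : Type*} {m0 : MeasurableSpace Ω} (μ : Measure Ω) [IsProbabilityMeasure μ]
    (n T : ℕ) (ε : ℕ → Ω → Fin n → ℝ) (hmeas : ∀ t, Measurable (ε t))
    (hindep : iIndepFun (m := fun _ => (inferInstance : MeasurableSpace (Fin n → ℝ))) ε μ)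
    (hindep' : ∀ t, iIndepFun (m := fun _ => (inferInstance : MeasurableSpace ℝ))
      (fun i ω => ε t ω i) μ)
    (hgauss : ∀ t i, Measure.map (fun ω => ε t ω i) μ = gaussianReal 0 1)
    (A : ℕ → Fin n → ℝ) (B : ℕ → ℕ → Matrix (Fin n) (Fin n) ℝ)
    (l : ℕ → Fin n → ℝ) (g : ℕ → Fin n → ℝ)
    (t : ℕ) (ht : t < T) :
    μ[fun ω => (DDens l ε (t + 1) ω)⁻¹ *
        (μ[fun x => DDens l ε T x *
            (∑ s ∈ Finset.Icc (t + 1) T, (g s) ⬝ᵥ (GProc A B ε s x)) | gaussFilt ε (t + 1)]) ω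
      | gaussFilt ε t]
      =ᵐ[μ]
    fun ω => (DDens l ε t ω)⁻¹ *
        (μ[fun x => DDens l ε T x *
            (∑ s ∈ Finset.Icc (t + 1) T, (g s) ⬝ᵥ (GProc A B ε s x)) | gaussFilt ε t]) ω
      - ∑ s ∈ Finset.Icc (t + 1) T, (g s) ⬝ᵥ ((B s (t + 1)).mulVec (l (t + 1))) := by
  have hlaw : ∀ u, μ.map (ε u) = stdGaussianPi (Fin n) := fun u ↦
    map_eq_stdGaussianPi (hmeas u) (hindep' u) (hgauss u)
  set C := noiseLoading B g t T with hC
  set K := ∑ s ∈ Icc (t + 1) T, g s ⬝ᵥ A s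
  simp_rw [sum_dotProduct_GProc A B g t T]
  have hQ : ∀ r ≤ T, μ[fun ω ↦ DDens l ε T ω * (K + noiseSum C ε T ω) | gaussFilt ε r]
      =ᵐ[μ] fun ω ↦ DDens l ε r ω * (K + ∑ u ∈ Ioc r T, C u ⬝ᵥ l u + noiseSum C ε r ω) :=
    fun r hr ↦ condExp_DDens_mul_add_noiseSum hmeas hindep hlaw l C hr K
  -- `DDens 0 ε ≡ 1` is the density for `λ = 0`; writing it in lets the one-step formula at
  -- `λ = 0` compute the `P`-expectation below.
  have hinner : (fun ω ↦ (DDens l ε (t + 1) ω)⁻¹ *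
        μ[fun ω ↦ DDens l ε T ω * (K + noiseSum C ε T ω) | gaussFilt ε (t + 1)] ω)
      =ᵐ[μ] fun ω ↦ DDens 0 ε (t + 1) ω *
        (K + ∑ u ∈ Ioc (t + 1) T, C u ⬝ᵥ l u + noiseSum C ε (t + 1) ω) := by
    filter_upwards [hQ (t + 1) ht] with ω hω
    rw [hω, inv_mul_cancel_left₀ (DDens_pos l (t + 1) ω).ne', DDens_zero_left, one_mul]
  have hP := condExp_DDens_succ_mul_add_noiseSum_succ hmeas hindep hlaw 0 C t
    (K + ∑ u ∈ Ioc (t + 1) T, C u ⬝ᵥ l u)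
  filter_upwards [(condExp_congr_ae hinner).trans hP, hQ t ht.le] with ω hP' hQ'
  rw [hP', hQ', inv_mul_cancel_left₀ (DDens_pos l t ω).ne', DDens_zero_left,
    Pi.zero_apply, dotProduct_zero, ← sum_Ioc_consecutive _ t.le_succ ht,
    Nat.Ioc_succ_singleton, sum_singleton, hC, noiseLoading_succ_dotProduct]
  ring

/-- In the Gaussian model, with `X_s := g_s^T G_s`,
`E^P_t[E^Q_{t+1}[Σ_{s=t+1}^T X_s]] = E^Q_t[Σ_{s=t+1}^T X_s] - Σ_{s=t+1}^T g_s^T B_{s,t+1} λ_{t+1}`,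
where `E^Q_r[Z] := D_r⁻¹ E^P_r[D_T Z]` for `G_T`-measurable `Z`. -/
theorem stmt_15 {Ω : Type*} {m0 : MeasurableSpace Ω} (μ : Measure Ω) [IsProbabilityMeasure μ]
    (n T : ℕ) (ε : ℕ → Ω → Fin n → ℝ) (hmeas : ∀ t, Measurable (ε t))
    (hindep : iIndepFun (m := fun _ => (inferInstance : MeasurableSpace (Fin n → ℝ))) ε μ)
    (hindep' : ∀ t, iIndepFun (m := fun _ => (inferInstance : MeasurableSpace ℝ))
      (fun i ω => ε t ω i) μ)
    (hgauss : ∀ t i, Measure.map (fun ω => ε t ω i) μ = gaussianReal 0 1)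
    (A : ℕ → Fin n → ℝ) (B : ℕ → ℕ → Matrix (Fin n) (Fin n) ℝ)
    (hdet : ∀ t, (B t t).det ≠ 0)
    (l : ℕ → Fin n → ℝ) (g : ℕ → Fin n → ℝ)
    (t : ℕ) (ht : t < T) :
    μ[fun ω => (DDens l ε (t + 1) ω)⁻¹ *
        (μ[fun x => DDens l ε T x *
            (∑ s ∈ Finset.Icc (t + 1) T, (g s) ⬝ᵥ (GProc A B ε s x)) | gaussFilt ε (t + 1)]) ω
      | gaussFilt ε t]
      =ᵐ[μ]
    fun ω => (DDens l ε t ω)⁻¹ *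
        (μ[fun x => DDens l ε T x *
            (∑ s ∈ Finset.Icc (t + 1) T, (g s) ⬝ᵥ (GProc A B ε s x)) | gaussFilt ε t]) ω
      - ∑ s ∈ Finset.Icc (t + 1) T, (g s) ⬝ᵥ ((B s (t + 1)).mulVec (l (t + 1))) :=
  stmt_15_general (m0 := m0) μ n T ε hmeas hindep hindep' hgauss A B l g t ht
end
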